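/- arXiv:2112.01026 — 13 statements merged into one kernel-verified Lean document; each statement's English description precedes it below -/
import Mathlib

section
/- Let u be a K-linear endomorphism of E whose minimal polynomial is p^k, where p ∈ K[X] is monic irreducible and k ≥ 1. Then there exist natural numbers a_1, …, a_k with a_k > 0 such that E, regarded as a K[X]-module with X acting as u, is isomorphic to the direct sum ⨁_{i=1}^{k} (K[X]/(p^i))^{a_i} of cyclic modules. -/
/-!
Since `minpoly K u = p ^ k`, the `K[X]`-module `E` is finitely generated and `p`-primary, so the
structure theorem over the PID `K[X]` gives `E ≃ ⨁ i, K[X] ⧸ (p ^ e i)`. The annihilator of the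
right-hand side is `(p ^ max e)`, while that of `E` is `(minpoly K u) = (p ^ k)`; hence
`max e = k`, so every exponent is at most `k` and `k` occurs. Grouping the summands by exponent
and discarding the trivial ones with `e i = 0` yields the stated form with `a n` the number of
summands of exponent `n`.
-/

open Polynomial

namespace LinearEquiv

variable (R : Type*) [Semiring R]

noncomputable def piSubtypeOfSubsingleton {ι : Type*} (V : ι → Type*)
    [∀ i, AddCommMonoid (V i)] [∀ i, Module R (V i)] (P : ι → Prop) [DecidablePred P]
    (h : ∀ i, ¬ P i → Subsingleton (V i)) :
    ((i : ι) → V i) ≃ₗ[R] ((i : {x // P x}) → V i) where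
  toFun f i := f i
  map_add' _ _ := rfl
  map_smul' _ _ := rfl
  invFun g i := if hi : P i then g ⟨i, hi⟩ else 0
  left_inv f := funext fun i => by
    by_cases hi : P i
    · simp [hi]
    · exact (h i hi).elim _ _
  right_inv g := funext fun i => dif_pos i.2

open scoped Classical in
noncomputable def piCompOfSubsingletonOffRange {ι ι' : Type*} (V : ι → Type*)
    [∀ i, AddCommMonoid (V i)] [∀ i, Module R (V i)] {f : ι' → ι} (hf : f.Injective)
    (h : ∀ i, i ∉ Set.range f → Subsingleton (V i)) :
    ((i : ι) → V i) ≃ₗ[R] ((j : ι') → V (f j)) :=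
  (piSubtypeOfSubsingleton R V (· ∈ Set.range f) h).trans
    (piCongrLeft R (fun i : Set.range f => V i) (Equiv.ofInjective f hf)).symm

noncomputable def piEquivPiFiber {ι κ : Type*} (N : κ → Type*)
    [∀ n, AddCommMonoid (N n)] [∀ n, Module R (N n)] (e : ι → κ) :
    ((i : ι) → N (e i)) ≃ₗ[R] ((n : κ) → {i // e i = n} → N n) :=
  (piCongrLeft R (fun x : Σ n, {i // e i = n} => N x.1) (Equiv.sigmaFiberEquiv e).symm).trans
    (piCurry R fun n _ => N n)

noncomputable def piEquivPiFinCardFiber (N : ℕ → Type*) [∀ n, AddCommMonoid (N n)]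
    [∀ n, Module R (N n)] [Subsingleton (N 0)] {ι : Type*} [Fintype ι] (e : ι → ℕ) {k : ℕ}
    (he : ∀ i, e i ≤ k) :
    ((i : ι) → N (e i)) ≃ₗ[R]
      ((j : Fin k) → Fin (Fintype.card {i // e i = j + 1}) → N (j + 1)) :=
  (piEquivPiFiber R N e).trans <|
    (piCongrRight fun n => funCongrLeft R (N n) (Fintype.equivFin _).symm).trans <|
    piCompOfSubsingletonOffRange R _ (f := fun j : Fin k => j.1 + 1)
      (fun _ _ h => Fin.ext (Nat.succ_injective h)) fun n hn => by
        -- the factor at `0` is `N 0`; beyond `k` the fibre of `e` is empty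
        rcases n with _ | m
        · infer_instance
        · have : IsEmpty {i // e i = m + 1} :=
            ⟨fun i => hn ⟨⟨m, by have := he i.1; have := i.2; omega⟩, rfl⟩⟩
          rw [Fintype.card_eq_zero]
          infer_instance

end LinearEquiv

theorem Ideal.iInf_span_singleton_pow {R ι : Type*} [CommSemiring R] [Fintype ι] (p : R)
    (e : ι → ℕ) : ⨅ i, Ideal.span {p ^ e i} = Ideal.span {p ^ Finset.univ.sup e} := by
  refine le_antisymm ?_ (le_iInf fun i => ?_)
  · rcases isEmpty_or_nonempty ι with hι | hι
    · simp
    · obtain ⟨i, -, hi⟩ := Finset.exists_mem_eq_sup Finset.univ Finset.univ_nonempty e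
      exact hi ▸ iInf_le _ i
  · exact Ideal.span_singleton_le_span_singleton.mpr
      (pow_dvd_pow p (Finset.le_sup (Finset.mem_univ i)))

theorem Module.annihilator_directSum_quotient_span_pow {R ι : Type*} [CommRing R] [Fintype ι]
    (p : R) (e : ι → ℕ) :
    Module.annihilator R (DirectSum ι fun i => R ⧸ R ∙ p ^ e i) =
      Ideal.span {p ^ Finset.univ.sup e} := by
  refine (Module.annihilator_dfinsupp (M := fun i => R ⧸ R ∙ p ^ e i)).trans ?_
  simp_rw [Ideal.annihilator_quotient]
  exact Ideal.iInf_span_singleton_pow p e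

theorem stmt_0_general {K E : Type*} [Field K] [AddCommGroup E] [Module K E]
    [FiniteDimensional K E]
    (u : Module.End K E) (p : K[X]) (hirr : Irreducible p)
    (k : ℕ) (hk : 1 ≤ k) (hmin : minpoly K u = p ^ k) :
    ∃ a : ℕ → ℕ, 0 < a k ∧
      Nonempty (Module.AEval' u ≃ₗ[K[X]]
        DirectSum (Fin k) fun i => Fin (a (i.1 + 1)) → K[X] ⧸ Ideal.span {p ^ (i.1 + 1)}) := by
  have hann : Module.annihilator K[X] (Module.AEval' u) = Ideal.span {p ^ k} := by
    rw [← hmin, span_minpoly_eq_annihilator]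
  have htors : Module.IsTorsion' (Module.AEval' u) (Submonoid.powers p) := fun x =>
    ⟨⟨p ^ k, k, rfl⟩, Module.mem_annihilator.mp (hann ▸ Ideal.mem_span_singleton_self _) x⟩
  obtain ⟨d, e, ⟨f⟩⟩ := Module.torsion_by_prime_power_decomposition hirr htors
  have hsup : Finset.univ.sup e = k := by
    rw [f.annihilator_eq, Module.annihilator_directSum_quotient_span_pow,
      Ideal.span_singleton_eq_span_singleton] at hann
    have hp0 := hirr.ne_zero
    exact le_antisymm ((pow_dvd_pow_iff hp0 hirr.not_isUnit).mp hann.dvd)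
      ((pow_dvd_pow_iff hp0 hirr.not_isUnit).mp hann.symm.dvd)
  have hne : (Finset.univ : Finset (Fin d)).Nonempty := by
    by_contra h
    rw [Finset.not_nonempty_iff_eq_empty.mp h, Finset.sup_empty] at hsup
    exact (hsup ▸ hk).not_gt Nat.zero_lt_one
  obtain ⟨i, -, hi⟩ := Finset.exists_mem_eq_sup Finset.univ hne e
  refine ⟨fun n => Fintype.card {i // e i = n}, Fintype.card_pos_iff.mpr ⟨⟨i, hi ▸ hsup⟩⟩, ⟨?_⟩⟩
  have : Subsingleton (K[X] ⧸ Ideal.span {p ^ 0}) := by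
    rw [pow_zero, Ideal.span_singleton_one]; infer_instance
  exact f.trans <| (DirectSum.linearEquivFunOnFintype _ _ _).trans <|
    (LinearEquiv.piEquivPiFinCardFiber K[X] (fun n => K[X] ⧸ Ideal.span {p ^ n}) e
      fun i => hsup ▸ Finset.le_sup (Finset.mem_univ i)).trans
    (DirectSum.linearEquivFunOnFintype _ _ _).symm

/-- If `u` is an endomorphism of a finite-dimensional `K`-vector space `E` whose minimal
polynomial is `p ^ k` with `p` monic irreducible and `k ≥ 1`, then there are multiplicities
`a 1, …, a k` with `a k > 0` such that `E`, viewed as a `K[X]`-module with `X` acting as `u`,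
is isomorphic to `⨁ i in {1,…,k}, (K[X]/(p^i))^(a i)`. -/
theorem stmt_0 {K E : Type*} [Field K] [AddCommGroup E] [Module K E]
    [FiniteDimensional K E]
    (u : Module.End K E) (p : K[X]) (hp : p.Monic) (hirr : Irreducible p)
    (k : ℕ) (hk : 1 ≤ k) (hmin : minpoly K u = p ^ k) :
    ∃ a : ℕ → ℕ, 0 < a k ∧
      Nonempty (Module.AEval' u ≃ₗ[K[X]]
        DirectSum (Fin k) fun i => Fin (a (i.1 + 1)) → K[X] ⧸ Ideal.span {p ^ (i.1 + 1)}) :=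
  stmt_0_general u p hirr k hk hmin
end

section
/- Let p ∈ K[X] be monic irreducible of degree g, let k ≥ 1, and let a_1, …, a_k be natural numbers with a_k > 0 and g·∑_{i=1}^{k} i·a_i = dim_K E. Then there exists a K-linear endomorphism u of E whose minimal polynomial is p^k and such that E, as a K[X]-module with X acting as u, is isomorphic to ⨁_{i=1}^{k} (K[X]/(p^i))^{a_i}. -/
/-!
Realise the prescribed module `M = ⨁ᵢ (K[X]/(pⁱ))^{aᵢ}` on `E`: its `K`-dimension is
`deg p · ∑ i aᵢ = dim E`, so any `K`-linear isomorphism `E ≃ M` transports multiplication by `X`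
to an endomorphism `u` with `E ≅ M` as `K[X]`-modules. The minimal polynomial of `u` generates the
annihilator of `M`, which is `(pᵏ)` because the largest exponent `k` actually occurs (`aₖ > 0`).
-/

open Polynomial

theorem Fin.sum_univ_add_one_eq_sum_Icc {M : Type*} [AddCommMonoid M] (f : ℕ → M) (k : ℕ) :
    ∑ i : Fin k, f (i + 1) = ∑ i ∈ Finset.Icc 1 k, f i := by
  rw [Fin.sum_univ_eq_sum_range (fun i => f (i + 1)), Finset.range_eq_Ico, Finset.sum_Ico_add',
    zero_add, Finset.Ico_add_one_right_eq_Icc]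

theorem Module.End.exists_aeval_linearEquiv {R E M : Type*} [CommSemiring R] [AddCommMonoid E]
    [Module R E] [AddCommMonoid M] [Module R[X] M] [Module R M] [IsScalarTower R R[X] M]
    (e : E ≃ₗ[R] M) : ∃ u : Module.End R E, Nonempty (Module.AEval' u ≃ₗ[R[X]] M) :=
  ⟨e.symm.conj (Algebra.lsmul R R M X), ⟨LinearEquiv.ofAEval _ e fun _ => e.apply_symm_apply _⟩⟩

theorem minpoly_eq_of_annihilator_eq_span {K E : Type*} [Field K] [AddCommGroup E] [Module K E]
    [FiniteDimensional K E] {u : Module.End K E} {q : K[X]} (hq : q.Monic)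
    (h : Module.annihilator K[X] (Module.AEval' u) = Ideal.span {q}) : minpoly K u = q :=
  eq_of_monic_of_associated (minpoly.monic (Algebra.IsIntegral.isIntegral u)) hq <|
    Ideal.span_singleton_eq_span_singleton.mp (by rw [span_minpoly_eq_annihilator, h])

theorem finrank_directSum_pi_quotient_span_pow {R : Type*} [CommRing R] [Nontrivial R]
    {p : R[X]} (hp : p.Monic) (k : ℕ) (a : ℕ → ℕ) :
    Module.finrank R
        (DirectSum (Fin k) fun i => Fin (a (i.1 + 1)) → R[X] ⧸ Ideal.span {p ^ (i.1 + 1)}) =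
      p.natDegree * ∑ i ∈ Finset.Icc 1 k, i * a i := by
  have := fun n : ℕ => (hp.pow n).finite_quotient
  have := fun n : ℕ => (hp.pow n).free_quotient
  rw [Module.finrank_directSum, Finset.mul_sum, ← Fin.sum_univ_add_one_eq_sum_Icc]
  refine Finset.sum_congr rfl fun i _ => ?_
  rw [Module.finrank_pi_fintype, finrank_quotient_span_eq_natDegree' (hp.pow _), hp.natDegree_pow]
  simp only [Finset.sum_const, Finset.card_univ, Fintype.card_fin, smul_eq_mul]
  ring

theorem Module.annihilator_directSum_pi_quotient_span_pow {R : Type*} [CommRing R] (p : R)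
    {k : ℕ} (a : ℕ → ℕ) (hak : 0 < a k) :
    Module.annihilator R
        (DirectSum (Fin k) fun i => Fin (a (i.1 + 1)) → R ⧸ Ideal.span {p ^ (i.1 + 1)}) =
      Ideal.span {p ^ k} := by
  ext f
  simp only [DirectSum, Module.annihilator_dfinsupp, Module.annihilator_pi,
    Ideal.annihilator_quotient, Ideal.mem_iInf, Ideal.mem_span_singleton]
  refine ⟨fun h => ?_, fun h i _ => (pow_dvd_pow p i.2).trans h⟩
  cases k with
  | zero => simp
  | succ n => exact h (Fin.last n) ⟨0, hak⟩

theorem stmt_2_general {K E : Type*} [Field K] [AddCommGroup E] [Module K E]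
    [FiniteDimensional K E]
    (p : K[X]) (hp : p.Monic)
    (k : ℕ) (a : ℕ → ℕ) (hak : 0 < a k)
    (hdim : p.natDegree * ∑ i ∈ Finset.Icc 1 k, i * a i = Module.finrank K E) :
    ∃ u : Module.End K E, minpoly K u = p ^ k ∧
      Nonempty (Module.AEval' u ≃ₗ[K[X]]
        DirectSum (Fin k) fun i => Fin (a (i.1 + 1)) → K[X] ⧸ Ideal.span {p ^ (i.1 + 1)}) := by
  have := fun n : ℕ => (hp.pow n).finite_quotient
  obtain ⟨u, ⟨iso⟩⟩ := Module.End.exists_aeval_linearEquiv <|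
    LinearEquiv.ofFinrankEq E _ <| by rw [finrank_directSum_pi_quotient_span_pow hp, hdim]
  refine ⟨u, minpoly_eq_of_annihilator_eq_span (hp.pow k) ?_, ⟨iso⟩⟩
  rw [iso.annihilator_eq, Module.annihilator_directSum_pi_quotient_span_pow p a hak]

/-- Given a monic irreducible `p` of degree `g`, `k ≥ 1` and multiplicities `a 1, …, a k` with
`a k > 0` and `g * ∑ i * a i = dim E`, there is an endomorphism `u` of `E` with minimal
polynomial `p ^ k` such that `E` as a `K[X]`-module (with `X` acting as `u`) is isomorphic to
`⨁ i in {1,…,k}, (K[X]/(p^i))^(a i)`. -/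
theorem stmt_2 {K E : Type*} [Field K] [AddCommGroup E] [Module K E]
    [FiniteDimensional K E]
    (p : K[X]) (hp : p.Monic) (hirr : Irreducible p)
    (k : ℕ) (hk : 1 ≤ k) (a : ℕ → ℕ) (hak : 0 < a k)
    (hdim : p.natDegree * ∑ i ∈ Finset.Icc 1 k, i * a i = Module.finrank K E) :
    ∃ u : Module.End K E, minpoly K u = p ^ k ∧
      Nonempty (Module.AEval' u ≃ₗ[K[X]]
        DirectSum (Fin k) fun i => Fin (a (i.1 + 1)) → K[X] ⧸ Ideal.span {p ^ (i.1 + 1)}) :=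
  stmt_2_general p hp k a hak hdim
end

section
/- Let u be a K-linear endomorphism of E whose minimal polynomial is p^k with p ∈ K[X] monic irreducible, let 0 ≤ i ≤ k, let W = ker p(u)^i (a u-invariant subspace), and let ū be the endomorphism induced by u on the quotient E/W. Then for every K-linear automorphism w of E/W commuting with ū there exists a K-linear automorphism v of E commuting with u which induces w on E/W. -/
/-!
Regard `E` as a `K[X]`-module `M` with `X` acting as `u`. Multiplication by `p ^ i` identifies
`E ⧸ W` with `p ^ i • M`, so `w` becomes an endomorphism of `p ^ i • M`; we extend it to `M` and
then make the extension invertible.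

An endomorphism `f` of `p • T` extends to `T` one cyclic submodule at a time: if `x ∉ N` but
`p • x ∈ N`, irreducibility of `p` gives `{r | r • x ∈ N} = (p)`, so `x ↦ m` with
`p • m = f (p • x)` is compatible with `f`. Climbing `p ^ i • M ≤ ⋯ ≤ p • M ≤ M` yields an
endomorphism `ψ` of `M` lifting `w`. Finally `ψ - π`, where `π` projects onto the Fitting component
`ker ψ ^ n`, is injective because `ψ` is nilpotent there, hence an automorphism; it still lifts `w`
because `w` is injective, which forces `ker ψ ^ n ≤ W`.
-/

open Polynomial Pointwise

theorem Submodule.mem_of_isCoprime_of_smul_mem {R M : Type*} [CommSemiring R] [AddCommMonoid M]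
    [Module R M] {N : Submodule R M} {a b : R} (hab : IsCoprime a b) {x : M}
    (ha : a • x ∈ N) (hb : b • x ∈ N) : x ∈ N := by
  obtain ⟨c, d, h⟩ := hab
  rw [← one_smul R x, ← h, add_smul, mul_smul, mul_smul]
  exact N.add_mem (N.smul_mem c ha) (N.smul_mem d hb)

theorem Module.End.exists_linearEquiv_sub_mem {R M : Type*} [Ring R] [AddCommGroup M] [Module R M]
    [IsNoetherian R M] [IsArtinian R M] (ψ : Module.End R M) (W : Submodule R M)
    (hW : W.comap ψ ≤ W) : ∃ v : M ≃ₗ[R] M, ∀ x, v x - ψ x ∈ W := by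
  obtain ⟨n, hcompl, hstable⟩ := ((LinearMap.eventually_isCompl_ker_pow_range_pow ψ).and
    (LinearMap.eventually_iSup_ker_pow_eq ψ)).exists
  let π := Submodule.projection (LinearMap.ker (ψ ^ n)) (LinearMap.range (ψ ^ n)) hcompl
  have hkerW : LinearMap.ker (ψ ^ n) ≤ W := by
    have hpow : ∀ k, W.comap (ψ ^ k) ≤ W := fun k => by
      induction k with
      | zero => exact fun x hx => hx
      | succ k ih => exact fun x hx => ih (hW (by rwa [pow_succ'] at hx))
    exact fun x hx => hpow n (by simp [LinearMap.mem_ker.1 hx])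
  have hinj : Function.Injective (ψ - π) := by
    rw [← LinearMap.ker_eq_bot, Submodule.eq_bot_iff]
    intro x hx
    have hψx : ψ x = π x := sub_eq_zero.1 hx
    have hx0 : x ∈ LinearMap.ker (ψ ^ n) := by
      rw [← hstable]
      refine Submodule.mem_iSup_of_mem (n + 1) ?_
      rw [LinearMap.mem_ker, pow_succ, Module.End.mul_apply, hψx]
      exact Submodule.projection_apply_mem hcompl x
    have hfix : ψ x = x := hψx.trans ((Submodule.projection_eq_self_iff hcompl x).2 hx0)
    rw [LinearMap.mem_ker, Module.End.pow_apply, Function.iterate_fixed hfix] at hx0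
    exact hx0
  refine ⟨LinearEquiv.ofBijective _ (IsArtinian.bijective_of_injective_endomorphism _ hinj),
    fun x => ?_⟩
  rw [LinearEquiv.ofBijective_apply, LinearMap.sub_apply, sub_sub_cancel_left]
  exact W.neg_mem (hkerW (Submodule.projection_apply_mem hcompl x))

section

variable {R M : Type*} [CommRing R] [IsBezout R] [AddCommGroup M] [Module R M] {p : R}

namespace LinearPMap

theorem apply_eq_smul_of_notMem_domain (hp : Irreducible p) (f : M →ₗ.[R] M) {x m : M}
    (hx : x ∉ f.domain) (hpx : p • x ∈ f.domain) (hm : f ⟨p • x, hpx⟩ = p • m)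
    (y : f.domain) (r : R) (hy : (y : M) = r • x) : f y = r • m := by
  obtain ⟨s, rfl⟩ | hcop := dvd_or_isCoprime p r hp
  · have : y = s • ⟨p • x, hpx⟩ := by
      ext; rw [hy, SetLike.val_smul, smul_smul, mul_comm]
    rw [this, f.map_smul, hm, smul_smul, mul_comm]
  · exact absurd (Submodule.mem_of_isCoprime_of_smul_mem hcop hpx (hy ▸ y.2)) hx

theorem exists_le_domain_eq_sup_span_singleton (hp : Irreducible p) (f : M →ₗ.[R] M) {x m : M}
    (hx : x ∉ f.domain) (hpx : p • x ∈ f.domain) (hm : f ⟨p • x, hpx⟩ = p • m) :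
    ∃ g : M →ₗ.[R] M, f ≤ g ∧ g.domain = f.domain ⊔ R ∙ x ∧
      LinearMap.range g.toFun ≤ LinearMap.range f.toFun ⊔ R ∙ m := by
  have key := apply_eq_smul_of_notMem_domain hp f hx hpx hm
  let s : M →ₗ.[R] M := mkSpanSingleton' x m fun c hc => by
    rw [RingHom.id_apply, ← key 0 c hc.symm, f.map_zero]
  have compat : ∀ (a : f.domain) (b : s.domain), (a : M) = b → f a = s b := by
    rintro a ⟨b, hb⟩ hab
    obtain ⟨c, rfl⟩ := Submodule.mem_span_singleton.1 hb
    rw [mkSpanSingleton'_apply, RingHom.id_apply, key a c hab]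
  refine ⟨f.sup s compat, f.left_le_sup s compat, rfl, ?_⟩
  rintro _ ⟨z, rfl⟩
  obtain ⟨a, ha, b, hb, hab⟩ := Submodule.mem_sup.1 z.2
  obtain ⟨c, rfl⟩ := Submodule.mem_span_singleton.1 hb
  change f.sup s compat z ∈ _
  rw [sup_apply compat ⟨a, ha⟩ ⟨c • x, hb⟩ z hab, mkSpanSingleton'_apply]
  exact Submodule.add_mem_sup (LinearMap.mem_range_self _ _)
    (Submodule.smul_mem _ c (Submodule.mem_span_singleton_self m))

theorem exists_le_domain_eq_of_domain_eq_smul [IsNoetherian R M] (hp : Irreducible p)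
    (T : Submodule R M) (f : M →ₗ.[R] M) (hdom : f.domain = p • T)
    (hrange : LinearMap.range f.toFun ≤ p • T) :
    ∃ g : M →ₗ.[R] M, f ≤ g ∧ g.domain = T ∧ LinearMap.range g.toFun ≤ T := by
  obtain ⟨_, ⟨g, hfg, rfl, hgT, hgrange⟩, hmax⟩ := set_has_maximal_iff_noetherian.2 ‹_›
    {D | ∃ g : M →ₗ.[R] M, f ≤ g ∧ g.domain = D ∧ D ≤ T ∧ LinearMap.range g.toFun ≤ T}
    ⟨_, f, le_rfl, rfl, hdom ▸ Submodule.smul_le_self_of_tower p T,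
      hrange.trans (Submodule.smul_le_self_of_tower p T)⟩
  refine ⟨g, hfg, le_antisymm hgT fun x hxT => by_contra fun hx => ?_, hgrange⟩
  have hpx : p • x ∈ f.domain := hdom ▸ Submodule.smul_mem_pointwise_smul x p T hxT
  obtain ⟨m, hmT, hm⟩ := (Submodule.mem_smul_pointwise_iff_exists _ _ _).1
    (hrange (LinearMap.mem_range_self f.toFun ⟨p • x, hpx⟩))
  obtain ⟨g', hgg', hdom', hrange'⟩ :=
    exists_le_domain_eq_sup_span_singleton hp g hx (hfg.1 hpx) ((hfg.2 rfl).symm.trans hm.symm)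
  refine hmax _ ⟨g', hfg.trans hgg', rfl, ?_, hrange'.trans ?_⟩ ?_
  · exact hdom' ▸ sup_le hgT ((Submodule.span_singleton_le_iff_mem _ _).2 hxT)
  · exact sup_le hgrange ((Submodule.span_singleton_le_iff_mem _ _).2 hmT)
  · rw [hdom']
    exact lt_of_le_of_ne le_sup_left fun h =>
      hx (h ▸ Submodule.mem_sup_right (Submodule.mem_span_singleton_self x))

theorem exists_le_domain_eq_top_of_domain_eq_pow_smul_top [IsNoetherian R M]
    (hp : Irreducible p) :
    ∀ (i : ℕ) (f : M →ₗ.[R] M), f.domain = p ^ i • ⊤ →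
      LinearMap.range f.toFun ≤ p ^ i • ⊤ → ∃ g : M →ₗ.[R] M, f ≤ g ∧ g.domain = ⊤
  | 0, f, hdom, _ => ⟨f, le_rfl, by simpa using hdom⟩
  | i + 1, f, hdom, hrange => by
    rw [pow_succ', mul_smul] at hdom hrange
    obtain ⟨g, hfg, hgdom, hgrange⟩ := exists_le_domain_eq_of_domain_eq_smul hp _ f hdom hrange
    obtain ⟨h, hgh, hhdom⟩ :=
      exists_le_domain_eq_top_of_domain_eq_pow_smul_top hp i g hgdom hgrange
    exact ⟨h, hfg.trans hgh, hhdom⟩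

end LinearPMap

theorem LinearMap.exists_comp_pow_smul_eq [IsNoetherian R M] (hp : Irreducible p) (i : ℕ)
    (φ : M →ₗ[R] M) (hker : ∀ x, p ^ i • x = 0 → φ x = 0) (hrange : LinearMap.range φ ≤ p ^ i • ⊤) :
    ∃ ψ : M →ₗ[R] M, ∀ x, ψ (p ^ i • x) = φ x := by
  let α : M →ₗ[R] M := DistribSMul.toLinearMap R M (p ^ i)
  have hαφ : LinearMap.ker α ≤ LinearMap.ker φ := fun x hx => hker x hx
  let f : M →ₗ.[R] M :=
    ⟨LinearMap.range α, (LinearMap.ker α).liftQ φ hαφ ∘ₗ α.quotKerEquivRange.symm.toLinearMap⟩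
  have hf : ∀ x, f ⟨p ^ i • x, LinearMap.mem_range_self α x⟩ = φ x := fun x => by
    change (LinearMap.ker α).liftQ φ hαφ (α.quotKerEquivRange.symm ⟨α x, _⟩) = φ x
    rw [LinearMap.quotKerEquivRange_symm_apply_image]
    rfl
  obtain ⟨g, hfg, hg⟩ := LinearPMap.exists_le_domain_eq_top_of_domain_eq_pow_smul_top hp i f
    (Submodule.map_top α).symm (by rintro _ ⟨⟨_, x, rfl⟩, rfl⟩; exact hrange ⟨x, (hf x).symm⟩)
  exact ⟨g.toFun ∘ₗ (LinearEquiv.ofTop _ hg).symm.toLinearMap,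
    fun x => (hfg.2 rfl).symm.trans (hf x)⟩

theorem LinearMap.exists_linearEquiv_pow_smul_eq [IsNoetherian R M] [IsArtinian R M]
    (hp : Irreducible p) (i : ℕ) (φ : M →ₗ[R] M) (hker : ∀ x, φ x = 0 ↔ p ^ i • x = 0)
    (hrange : LinearMap.range φ ≤ p ^ i • ⊤) : ∃ v : M ≃ₗ[R] M, ∀ x, p ^ i • v x = φ x := by
  obtain ⟨ψ, hψ⟩ := LinearMap.exists_comp_pow_smul_eq hp i φ (fun x => (hker x).2) hrange
  have hψφ : ∀ x, p ^ i • ψ x = φ x := fun x => by rw [← map_smul, hψ]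
  obtain ⟨v, hv⟩ := Module.End.exists_linearEquiv_sub_mem ψ
    (LinearMap.ker (DistribSMul.toLinearMap R M (p ^ i))) fun x hx => (hker x).1 (by
      rw [← hψφ]; exact hx)
  refine ⟨v, fun x => ?_⟩
  rw [← hψφ, ← sub_eq_zero, ← smul_sub]
  exact hv x

end

theorem Module.End.exists_linearEquiv_commute_aeval_pow_eq {K E : Type*} [Field K] [AddCommGroup E]
    [Module K E] [FiniteDimensional K E] (u : Module.End K E) {p : K[X]} (hp : Irreducible p)
    (i : ℕ) (φ : Module.End K E) (hφu : ∀ x, φ (u x) = u (φ x))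
    (hker : LinearMap.ker φ = LinearMap.ker (aeval u p ^ i))
    (hrange : LinearMap.range φ ≤ LinearMap.range (aeval u p ^ i)) :
    ∃ v : E ≃ₗ[K] E, (∀ x, v (u x) = u (v x)) ∧ ∀ x, (aeval u p ^ i) (v x) = φ x := by
  let ι := Module.AEval'.of u
  have hX : ∀ x, ι (u x) = (X : K[X]) • ι x := fun x => (Module.AEval'.X_smul_of u x).symm
  have hpow : ∀ x, ι ((aeval u p ^ i) x) = p ^ i • ι x := fun x => by
    rw [← map_pow]; exact Module.AEval.of_aeval_smul _ _ _
  let Φ := LinearMap.ofAEval u (ι.toLinearMap ∘ₗ φ) fun x => by simp [hφu, hX]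
  have hΦ : ∀ x, Φ (ι x) = ι (φ x) := fun x => by simp [Φ, LinearMap.ofAEval, ι]
  have : IsArtinian K[X] (Module.AEval' u) := isArtinian_of_tower K inferInstance
  have hΦker : ∀ y, Φ y = 0 ↔ p ^ i • y = 0 := fun y => by
    obtain ⟨x, rfl⟩ := ι.surjective y
    rw [hΦ, ← hpow, ι.map_eq_zero_iff, ι.map_eq_zero_iff, ← LinearMap.mem_ker, hker,
      LinearMap.mem_ker]
  have hΦrange : LinearMap.range Φ ≤ p ^ i • ⊤ := by
    rintro _ ⟨y, rfl⟩
    obtain ⟨x, rfl⟩ := ι.surjective y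
    obtain ⟨z, hz⟩ := hrange (LinearMap.mem_range_self φ x)
    rw [hΦ, ← hz, hpow]
    exact Submodule.smul_mem_pointwise_smul _ _ ⊤ trivial
  obtain ⟨v, hv⟩ := LinearMap.exists_linearEquiv_pow_smul_eq hp i Φ hΦker hΦrange
  refine ⟨ι.trans ((v.restrictScalars K).trans ι.symm), fun x => ?_, fun x => ?_⟩
  · change ι.symm (v (ι (u x))) = u (ι.symm (v (ι x)))
    rw [hX, map_smul]
    exact Module.AEval'.of_symm_X_smul u _
  · apply ι.injective
    simp [hpow, hv, hΦ]

theorem stmt_3_general {K E : Type*} [Field K] [AddCommGroup E] [Module K E]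
    [FiniteDimensional K E]
    (u : Module.End K E) (p : K[X]) (hirr : Irreducible p)
    (i : ℕ)
    (W : Submodule K E) (hW : W = LinearMap.ker ((aeval u p) ^ i))
    (ubar : Module.End K (E ⧸ W))
    (hubar : ∀ x : E, ubar (Submodule.Quotient.mk x) = Submodule.Quotient.mk (u x)) :
    ∀ w : (E ⧸ W) ≃ₗ[K] (E ⧸ W), (∀ y, w (ubar y) = ubar (w y)) →
      ∃ v : E ≃ₗ[K] E, (∀ x, v (u x) = u (v x)) ∧
        ∀ x : E, w (Submodule.Quotient.mk x) = Submodule.Quotient.mk (v x) := by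
  intro w hw
  set q := aeval u p ^ i
  have hqu : ∀ x, q (u x) = u (q x) := fun x => by
    have : Commute u q := by simpa using ((commute_X p).map (aeval u)).pow_right i
    exact (LinearMap.congr_fun this x).symm
  let e : (E ⧸ W) ≃ₗ[K] LinearMap.range q :=
    (Submodule.quotEquivOfEq W _ hW).trans q.quotKerEquivRange
  have he : ∀ x, (e (Submodule.Quotient.mk x) : E) = q x := fun _ => rfl
  have heu : ∀ y, (e (ubar y) : E) = u (e y) := by
    rintro ⟨x⟩
    exact (congrArg (fun z => (e z : E)) (hubar x)).trans ((he _).trans (hqu x))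
  let φ : Module.End K E := (LinearMap.range q).subtype ∘ₗ e.toLinearMap ∘ₗ w.toLinearMap ∘ₗ W.mkQ
  have hφu : ∀ x, φ (u x) = u (φ x) := fun x => by
    change (e (w (Submodule.Quotient.mk (u x))) : E) = u (e (w (Submodule.Quotient.mk x)))
    rw [← hubar, hw, heu]
  have hker : LinearMap.ker φ = W := by ext x; simp [φ]
  obtain ⟨v, hvu, hv⟩ := Module.End.exists_linearEquiv_commute_aeval_pow_eq u hirr i φ hφu
    (hker.trans hW) (by rintro _ ⟨x, rfl⟩; exact (e (w (Submodule.Quotient.mk x))).2)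
  exact ⟨v, hvu, fun x => e.injective (Subtype.ext ((hv x).symm.trans (he (v x)).symm))⟩

/-- Let `u` have minimal polynomial `p ^ k`, let `W = ker p(u)^i` (`0 ≤ i ≤ k`), a `u`-invariant
subspace, and let `ū` be the endomorphism induced by `u` on `E / W`.  Every automorphism `w` of
`E / W` commuting with `ū` lifts to an automorphism `v` of `E` commuting with `u` which induces
`w` on `E / W`. -/
theorem stmt_3 {K E : Type*} [Field K] [AddCommGroup E] [Module K E]
    [FiniteDimensional K E]
    (u : Module.End K E) (p : K[X]) (hp : p.Monic) (hirr : Irreducible p)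
    (k : ℕ) (hmin : minpoly K u = p ^ k) (i : ℕ) (hik : i ≤ k)
    (W : Submodule K E) (hW : W = LinearMap.ker ((aeval u p) ^ i))
    (ubar : Module.End K (E ⧸ W))
    (hubar : ∀ x : E, ubar (Submodule.Quotient.mk x) = Submodule.Quotient.mk (u x)) :
    ∀ w : (E ⧸ W) ≃ₗ[K] (E ⧸ W), (∀ y, w (ubar y) = ubar (w y)) →
      ∃ v : E ≃ₗ[K] E, (∀ x, v (u x) = u (v x)) ∧
        ∀ x : E, w (Submodule.Quotient.mk x) = Submodule.Quotient.mk (v x) :=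
  stmt_3_general u p hirr i W hW ubar hubar
end

section
/- Let u be a symplectic transformation of E and let d = minpoly K u. Then the reverse polynomial of d satisfies reverse(d) = d(0) • d, and d(0)^2 = 1 (i.e. the reverse of the minimal polynomial equals ±d). -/
open Polynomial

/-- If `x * y = 1 = y * x` in an algebra, then `x ^ n * aeval y (reflect n f) = aeval x f`
whenever `f.natDegree ≤ n`. -/
lemma aux_reflect {K A : Type*} [Field K] [Ring A] [Algebra K A]
    (x y : A) (hxy : x * y = 1) (hyx : y * x = 1) (f : K[X]) (n : ℕ)
    (hf : f.natDegree ≤ n) :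
    x ^ n * Polynomial.aeval y (Polynomial.reflect n f) = Polynomial.aeval x f := by
  have hc : Commute x y := by rw [Commute, SemiconjBy, hxy, hyx]
  have hpow : ∀ k, k ≤ n → x ^ n * y ^ k = x ^ (n - k) := by
    intro k hk
    have h1 : x ^ k * y ^ k = 1 := by
      rw [← hc.mul_pow, hxy, one_pow]
    calc x ^ n * y ^ k = x ^ (n - k) * (x ^ k * y ^ k) := by
          rw [← mul_assoc, ← pow_add, Nat.sub_add_cancel hk]
      _ = x ^ (n - k) := by rw [h1, mul_one]
  have hrefl : (Polynomial.reflect n f).natDegree < n + 1 := by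
    rw [Nat.lt_succ_iff]
    apply Polynomial.natDegree_le_iff_coeff_eq_zero.mpr
    intro m hm
    rw [Polynomial.coeff_reflect, Polynomial.revAt_eq_self_of_lt hm]
    exact Polynomial.coeff_eq_zero_of_natDegree_lt (lt_of_le_of_lt hf hm)
  rw [Polynomial.aeval_eq_sum_range' hrefl y,
    Polynomial.aeval_eq_sum_range' (Nat.lt_succ_of_le hf) x, Finset.mul_sum,
    ← Finset.sum_range_reflect (fun i => f.coeff i • x ^ i) (n + 1)]
  apply Finset.sum_congr rfl
  intro i hi
  have hi' : i ≤ n := by simpa [Nat.lt_succ_iff] using hi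
  simp only [Nat.add_sub_cancel]
  rw [Polynomial.coeff_reflect, Polynomial.revAt_le hi', mul_smul_comm, hpow i hi']

/-- For a symplectic transformation `u` with minimal polynomial `d`, the reverse of `d` equals
`d(0) • d`, and `d(0)^2 = 1`. -/
theorem stmt_4 {K E : Type*} [Field K] (hchar : (2 : K) ≠ 0)
    [AddCommGroup E] [Module K E] [FiniteDimensional K E]
    (B : E →ₗ[K] E →ₗ[K] K) (halt : ∀ x, B x x = 0)
    (hnd : ∀ x, (∀ y, B x y = 0) → x = 0)
    (u : E ≃ₗ[K] E) (hu : ∀ x y, B (u x) (u y) = B x y) :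
    (minpoly K (u : Module.End K E)).reverse
        = (minpoly K (u : Module.End K E)).eval 0 • minpoly K (u : Module.End K E) ∧
      ((minpoly K (u : Module.End K E)).eval 0) ^ 2 = 1 := by
  classical
  -- skew symmetry and right nondegeneracy
  have hskew : ∀ a b, B a b = - B b a := by
    intro a b
    have h := halt (a + b)
    simp only [map_add, LinearMap.add_apply, halt a, halt b] at h
    linear_combination h
  have hnd' : ∀ z, (∀ a, B a z = 0) → z = 0 := by
    intro z h
    exact hnd z fun y => by rw [hskew]; rw [h y]; ring
  -- adjoint lemma for any symplectic automorphism
  have hadj : ∀ (w : E ≃ₗ[K] E), (∀ a b, B (w a) (w b) = B a b) →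
      ∀ (f : K[X]) (a b : E),
        B (Polynomial.aeval (w : Module.End K E) f a) b
          = B a (Polynomial.aeval (w.symm : Module.End K E) f b) := by
    intro w hw
    have hstep : ∀ a b, B (w a) b = B a (w.symm b) := by
      intro a b
      conv_lhs => rw [show b = w (w.symm b) by simp]
      exact hw a (w.symm b)
    have hpowadj : ∀ (k : ℕ) (a b : E),
        B (((w : Module.End K E) ^ k) a) b = B a (((w.symm : Module.End K E) ^ k) b) := by
      intro k
      induction k with
      | zero => intro a b; simp
      | succ k ih =>
        intro a b
        have e1 : ((w : Module.End K E) ^ (k + 1)) a = ((w : Module.End K E) ^ k) (w a) := by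
          rw [pow_succ]; rfl
        have e2 : ((w.symm : Module.End K E) ^ (k + 1)) b
            = w.symm (((w.symm : Module.End K E) ^ k) b) := by
          rw [pow_succ']; rfl
        rw [e1, e2, ih (w a) b, hstep]
    intro f a b
    have expand : ∀ (T : Module.End K E) (z : E),
        (Polynomial.aeval T f) z
          = ∑ i ∈ Finset.range (f.natDegree + 1), f.coeff i • ((T ^ i) z) := by
      intro T z
      rw [Polynomial.aeval_eq_sum_range]
      simp [LinearMap.sum_apply, LinearMap.smul_apply]
    rw [expand, expand]
    simp only [map_sum, map_smul, LinearMap.sum_apply, LinearMap.smul_apply, smul_eq_mul]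
    exact Finset.sum_congr rfl fun i _ => by rw [hpowadj i a b]
  set x : Module.End K E := (u : Module.End K E) with hxdef
  set v : Module.End K E := (u.symm : Module.End K E) with hvdef
  have hxv : x * v = 1 := by ext z; simp [hxdef, hvdef, Module.End.mul_apply]
  have hvx : v * x = 1 := by ext z; simp [hxdef, hvdef, Module.End.mul_apply]
  have hu' : ∀ a b, B (u.symm a) (u.symm b) = B a b := by
    intro a b
    rw [← hu (u.symm a) (u.symm b)]
    simp
  set d : K[X] := minpoly K x with hddef
  have hint : IsIntegral K x := Algebra.IsIntegral.isIntegral x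
  have hintv : IsIntegral K v := Algebra.IsIntegral.isIntegral v
  have hmonic : d.Monic := minpoly.monic hint
  have hdne : d ≠ 0 := hmonic.ne_zero
  -- d annihilates v
  have h1 : Polynomial.aeval v d = 0 := by
    apply LinearMap.ext
    intro b
    simp only [LinearMap.zero_apply]
    apply hnd'
    intro a
    rw [← hadj u hu d a b, minpoly.aeval]
    simp
  -- minpoly of v annihilates x
  have h2 : Polynomial.aeval x (minpoly K v) = 0 := by
    apply LinearMap.ext
    intro b
    simp only [LinearMap.zero_apply]
    apply hnd'
    intro a
    have h3 := hadj u.symm hu' (minpoly K v) a b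
    simp only [LinearEquiv.symm_symm] at h3
    rw [← hvdef] at h3
    rw [minpoly.aeval] at h3
    rw [← hxdef] at h3
    rw [← h3]
    simp
  have heq : d = minpoly K v := by
    have hdv : d ∣ minpoly K v := minpoly.dvd K x h2
    have hvd : minpoly K v ∣ d := minpoly.dvd K v h1
    exact eq_of_monic_of_associated hmonic (minpoly.monic hintv)
      (associated_of_dvd_dvd hdv hvd)
  -- x is a unit, so d(0) ≠ 0
  have hd0 : d.eval 0 ≠ 0 := by
    intro h0
    have hX : Polynomial.X ∣ d := Polynomial.X_dvd_iff.mpr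
      (by rwa [Polynomial.coeff_zero_eq_eval_zero])
    obtain ⟨q, hq⟩ := hX
    have hq0 : q ≠ 0 := fun h => hdne (by rw [hq, h, mul_zero])
    have haq : Polynomial.aeval x q = 0 := by
      have h4 : Polynomial.aeval x d = 0 := minpoly.aeval K x
      rw [hq, map_mul, Polynomial.aeval_X] at h4
      have hx : IsUnit x := ⟨⟨x, v, hxv, hvx⟩, rfl⟩
      exact (hx.mul_right_eq_zero).mp h4
    have hdq : d ∣ q := minpoly.dvd K x haq
    have h1' : d.natDegree ≤ q.natDegree := Polynomial.natDegree_le_of_dvd hdq hq0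
    have h2' : d.natDegree = 1 + q.natDegree := by
      rw [hq, Polynomial.natDegree_mul Polynomial.X_ne_zero hq0, Polynomial.natDegree_X]
    omega
  -- reverse d annihilates v
  have hrev : Polynomial.aeval v d.reverse = 0 := by
    have key := aux_reflect x v hxv hvx d d.natDegree le_rfl
    rw [minpoly.aeval] at key
    have hx : IsUnit (x ^ d.natDegree) := IsUnit.pow _ (⟨⟨x, v, hxv, hvx⟩, rfl⟩ : IsUnit x)
    exact (hx.mul_right_eq_zero).mp key
  have hdvdrev : d ∣ d.reverse := by
    rw [heq] at hrev ⊢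
    exact minpoly.dvd K v hrev
  obtain ⟨q, hq⟩ := hdvdrev
  have hrevne : d.reverse ≠ 0 := fun h => hdne (Polynomial.reverse_eq_zero.mp h)
  have hqne : q ≠ 0 := fun h => hrevne (by rw [hq, h, mul_zero])
  have htd : d.natTrailingDegree = 0 := by
    rw [Polynomial.natTrailingDegree_eq_zero]
    right
    rwa [Polynomial.coeff_zero_eq_eval_zero]
  have hdegrev : d.reverse.natDegree = d.natDegree := by
    rw [Polynomial.reverse_natDegree, htd, Nat.sub_zero]
  have hqdeg : q.natDegree = 0 := by
    have h5 := hdegrev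
    rw [hq, Polynomial.natDegree_mul hdne hqne] at h5
    omega
  have hqC : q = Polynomial.C (q.coeff 0) := Polynomial.eq_C_of_natDegree_eq_zero hqdeg
  -- identify the constant
  have hlead : d.reverse.leadingCoeff = d.eval 0 := by
    rw [Polynomial.reverse_leadingCoeff, Polynomial.trailingCoeff, htd,
      Polynomial.coeff_zero_eq_eval_zero]
  have hc : q.coeff 0 = d.eval 0 := by
    have h6 := hlead
    rw [hq, Polynomial.leadingCoeff_mul, hmonic.leadingCoeff, one_mul] at h6
    rw [hqC] at h6
    simpa using h6
  have hmain : d.reverse = d.eval 0 • d := by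
    rw [hq, hqC, hc, Polynomial.smul_eq_C_mul, mul_comm]
  refine ⟨hmain, ?_⟩
  have h0 : d.reverse.coeff 0 = 1 := by
    rw [Polynomial.coeff_zero_reverse, hmonic.leadingCoeff]
  rw [hmain, Polynomial.coeff_smul, Polynomial.coeff_zero_eq_eval_zero, smul_eq_mul] at h0
  rw [pow_two]
  exact h0
end

section
/- Let u be a symplectic transformation of E, let f, g ∈ K[X], and let x, y ∈ E satisfy f(u)(x) = 0 and g(u)(y) = 0. If reverse(f) and g are coprime in K[X], then ⟨x, y⟩ = 0. -/
open Polynomial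

/-- If `u` is symplectic, `f(u) x = 0`, `g(u) y = 0` and `reverse f` is coprime to `g`, then
`⟨x, y⟩ = 0`. -/
theorem stmt_5 {K E : Type*} [Field K] (hchar : (2 : K) ≠ 0)
    [AddCommGroup E] [Module K E] [FiniteDimensional K E]
    (B : E →ₗ[K] E →ₗ[K] K) (halt : ∀ x, B x x = 0)
    (hnd : ∀ x, (∀ y, B x y = 0) → x = 0)
    (u : E ≃ₗ[K] E) (hu : ∀ x y, B (u x) (u y) = B x y)
    (f g : K[X]) (x y : E)
    (hx : aeval (u : Module.End K E) f x = 0)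
    (hy : aeval (u : Module.End K E) g y = 0)
    (hcop : IsCoprime f.reverse g) :
    B x y = 0 := by
  set U : Module.End K E := (u : E →ₗ[K] E) with hUdef
  set V : Module.End K E := (u.symm : E →ₗ[K] E) with hVdef
  have hUV : U * V = 1 := by
    ext z; simp [hUdef, hVdef, Module.End.mul_apply]
  have hVU : V * U = 1 := by
    ext z; simp [hUdef, hVdef, Module.End.mul_apply]
  have hcomm : Commute V U := by
    unfold Commute SemiconjBy; rw [hUV, hVU]
  have hVUpow : ∀ k : ℕ, V ^ k * U ^ k = 1 := by
    intro k; rw [← hcomm.mul_pow, hVU, one_pow]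
  -- single step adjoint
  have h1 : ∀ x y : E, B x (U y) = B (V x) y := by
    intro x y
    have := hu (u.symm x) y
    rw [LinearEquiv.apply_symm_apply] at this
    exact this
  -- adjoint for powers
  have hpow : ∀ (n : ℕ) (x y : E), B x ((U ^ n) y) = B ((V ^ n) x) y := by
    intro n
    induction n with
    | zero => simp
    | succ n ih =>
      intro x y
      rw [pow_succ', Module.End.mul_apply, h1, ih, ← Module.End.mul_apply, ← pow_succ]
  -- adjoint for polynomials
  have hadj : ∀ (p : K[X]) (x y : E), B x (aeval U p y) = B (aeval V p x) y := by
    intro p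
    induction p using Polynomial.induction_on' with
    | add p q hp hq =>
      intro x y
      simp only [map_add, LinearMap.add_apply, map_add, hp, hq]
    | monomial n a =>
      intro x y
      simp only [aeval_monomial, Module.End.mul_apply, Module.algebraMap_end_apply,
        map_smul, LinearMap.smul_apply, smul_eq_mul, hpow n]
  set n := f.natDegree with hn
  -- key identity
  have key : ∀ (p : K[X]), p.natDegree ≤ n →
      aeval V (reflect n p) * U ^ n = aeval U p := by
    refine Polynomial.induction_with_natDegree_le
      (fun p => aeval V (reflect n p) * U ^ n = aeval U p) n ?_ ?_ ?_
    · simp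
    · intro m r _ hmn
      simp only [reflect_C_mul_X_pow, revAt_le hmn, map_mul, aeval_C, aeval_X_pow]
      conv_lhs => rw [show U ^ n = U ^ (n - m) * U ^ m by
        rw [← pow_add, Nat.sub_add_cancel hmn]]
      rw [mul_assoc, ← mul_assoc (V ^ (n - m)), hVUpow, one_mul]
    · intro p q _ _ hp hq
      simp only [reflect_add, map_add, add_mul, hp, hq]
  have keyf : aeval V f.reverse * U ^ n = aeval U f := key f le_rfl
  -- reverse f vanishes at V on x
  have hc : aeval V f.reverse * V ^ n = V ^ n * aeval V f.reverse := by
    have hXn : V ^ n = aeval V (X ^ n : K[X]) := by simp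
    rw [hXn, ← map_mul, ← map_mul, mul_comm]
  have hxV : aeval V f.reverse x = 0 := by
    have h0 : aeval V f.reverse x = (V ^ n) ((aeval U f) x) := by
      calc aeval V f.reverse x = (aeval V f.reverse * (V ^ n * U ^ n)) x := by
            rw [hVUpow, mul_one]
        _ = (V ^ n * (aeval V f.reverse * U ^ n)) x := by
            rw [← mul_assoc, hc, mul_assoc]
        _ = (V ^ n) ((aeval U f) x) := by rw [keyf]; rfl
    rw [h0, hx, map_zero]
  -- combine via coprimality
  obtain ⟨a, b, hab⟩ := hcop
  have hy' : y = aeval U (a * f.reverse) y + aeval U (b * g) y := by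
    have := congrArg (fun p => aeval U p y) hab
    simpa using this.symm
  have h2 : aeval U (b * g) y = 0 := by
    rw [map_mul, Module.End.mul_apply, hy, map_zero]
  have h3 : aeval V (a * f.reverse) x = 0 := by
    rw [map_mul, Module.End.mul_apply, hxV, map_zero]
  rw [hy', map_add, h2, map_zero, add_zero, hadj, h3, map_zero, LinearMap.zero_apply]
end

section
/- Let u be a symplectic transformation of E whose minimal polynomial factors as d = d₁·d₂ with d₁, d₂ ∈ K[X] coprime, and suppose reverse(d₁) = c₁ • d₁ and reverse(d₂) = c₂ • d₂ for some nonzero scalars c₁, c₂ ∈ K. Then: (a) E is the direct sum of the u-invariant subspaces E₁ = ker d₁(u) and E₂ = ker d₂(u); (b) ⟨x, y⟩ = 0 whenever x ∈ E₁ and y ∈ E₂; (c) the restriction of ⟨·,·⟩ to each of E₁ and E₂ is nondegenerate. -/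
/-!
Since `u` preserves `B`, the maps `u` and `u⁻¹` are adjoint, hence so are `p(u)` and `p(u⁻¹)` for
every polynomial `p`. The reciprocity `reverse d₂ = c₂ • d₂` gives
`d₂(u⁻¹) = u⁻ⁿ (reverse d₂)(u)`, so `ker d₂(u) ⊆ ker d₂(u⁻¹)`. Writing `1 = a d₁ + b d₂`, every
`y ∈ E₂` equals `(a d₁)(u⁻¹) y`, and moving this across `B` onto `x ∈ E₁` gives `B x y = 0`.
The primary decomposition `E = E₁ ⊕ E₂` then passes nondegeneracy of `B` to each summand.
-/

open Polynomial

section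

variable {R M M₂ : Type*} [CommRing R] [AddCommGroup M] [Module R M] [AddCommGroup M₂]
  [Module R M₂]

theorem Module.End.apply_mem_ker_aeval (f : Module.End R M) (p : R[X]) {x : M}
    (hx : x ∈ LinearMap.ker (aeval f p)) : f x ∈ LinearMap.ker (aeval f p) := by
  have hcomm : Commute (aeval f p) f := by simpa using (Commute.all p X).map (aeval f)
  rw [LinearMap.mem_ker, ← Module.End.mul_apply, hcomm.eq, Module.End.mul_apply,
    LinearMap.mem_ker.1 hx, map_zero]

theorem Module.End.isCompl_ker_aeval_of_isCoprime (f : Module.End R M) {p q : R[X]}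
    (hpq : IsCoprime p q) (hf : aeval f (p * q) = 0) :
    IsCompl (LinearMap.ker (aeval f p)) (LinearMap.ker (aeval f q)) :=
  ⟨disjoint_ker_aeval_of_isCoprime f hpq, codisjoint_iff.2 <| by
    rw [sup_ker_aeval_eq_ker_aeval_mul_of_coprime f hpq, hf, LinearMap.ker_zero]⟩

open scoped IsMulCommutative in
theorem LinearEquiv.aeval_symm_eq_pow_mul_aeval_reverse (u : M ≃ₗ[R] M) (p : R[X]) :
    aeval (u.symm : Module.End R M) p =
      (u.symm : Module.End R M) ^ p.natDegree * aeval (u : Module.End R M) p.reverse := by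
  set U : Module.End R M := ↑u
  set V : Module.End R M := ↑u.symm
  have hUV : U * V = 1 := LinearMap.ext u.apply_symm_apply
  have hVU : V * U = 1 := LinearMap.ext u.symm_apply_apply
  -- `eval₂_reverse_mul_pow` needs a commutative target: work in the algebra generated by `u, u⁻¹`.
  let A := Algebra.adjoin R {U, V}
  have : IsMulCommutative A := Algebra.isMulCommutative_adjoin R (by
    simp only [Set.mem_insert_iff, Set.mem_singleton_iff]
    rintro a (rfl | rfl) b (rfl | rfl) <;> simp [hUV, hVU])
  let U' : A := ⟨U, Algebra.subset_adjoin (by simp)⟩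
  let V' : A := ⟨V, Algebra.subset_adjoin (by simp)⟩
  let : Invertible V' := ⟨U', Subtype.ext hUV, Subtype.ext hVU⟩
  have key := congrArg A.val (eval₂_reverse_mul_pow (algebraMap R A) V' p)
  rw [mul_comm, ← aeval_def, ← aeval_def, map_mul, map_pow, ← aeval_algHom_apply,
    ← aeval_algHom_apply] at key
  exact key.symm

theorem LinearEquiv.ker_aeval_le_ker_aeval_symm_of_reverse_eq_smul (u : M ≃ₗ[R] M)
    {p : R[X]} {c : R} (hp : p.reverse = c • p) :
    LinearMap.ker (aeval (u : Module.End R M) p) ≤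
      LinearMap.ker (aeval (u.symm : Module.End R M) p) := by
  intro x hx
  rw [LinearMap.mem_ker, u.aeval_symm_eq_pow_mul_aeval_reverse, Module.End.mul_apply, hp]
  simp [LinearMap.mem_ker.1 hx]

namespace LinearMap.IsAdjointPair

variable {B : M →ₗ[R] M →ₗ[R] M₂} {f g : Module.End R M}

theorem pow (h : IsAdjointPair B B f g) : ∀ n : ℕ, IsAdjointPair B B ⇑(f ^ n) ⇑(g ^ n)
  | 0 => by simpa using isAdjointPair_one
  | n + 1 => by rw [pow_succ f, pow_succ' g]; exact (h.pow n).mul h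

theorem aeval (h : IsAdjointPair B B f g) (p : R[X]) :
    IsAdjointPair B B ⇑(Polynomial.aeval f p) ⇑(Polynomial.aeval g p) := by
  induction p using Polynomial.induction_on' with
  | add p q hp hq =>
    rw [map_add, map_add]
    exact hp.add hq
  | monomial n a => simpa [aeval_monomial, ← Algebra.smul_def] using (h.pow n).smul a

theorem apply_eq_zero_of_isCoprime (h : IsAdjointPair B B f g) {p q : R[X]}
    (hpq : IsCoprime p q) {x y : M} (hx : Polynomial.aeval f p x = 0)
    (hy : Polynomial.aeval g q y = 0) : B x y = 0 := by
  obtain ⟨a, b, hab⟩ := hpq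
  have hy' : Polynomial.aeval g (a * p) y = y := by
    have := congrArg (fun r => Polynomial.aeval g r y) hab
    simpa [hy] using this
  rw [← hy', ← h.aeval, map_mul, Module.End.mul_apply, hx, map_zero, map_zero, LinearMap.zero_apply]

end LinearMap.IsAdjointPair

theorem LinearMap.eq_zero_of_forall_mem_apply_eq_zero_of_sup_eq_top {B : M →ₗ[R] M →ₗ[R] M₂}
    (hB : ∀ x, (∀ y, B x y = 0) → x = 0) {E₁ E₂ : Submodule R M} (hE : E₁ ⊔ E₂ = ⊤)
    (horth : ∀ x ∈ E₁, ∀ y ∈ E₂, B x y = 0) {x : M} (hx : x ∈ E₁)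
    (hx₁ : ∀ y ∈ E₁, B x y = 0) : x = 0 := by
  refine hB x fun y => ?_
  obtain ⟨y₁, hy₁, y₂, hy₂, rfl⟩ := Submodule.mem_sup.1 (hE ▸ Submodule.mem_top : y ∈ E₁ ⊔ E₂)
  rw [map_add, hx₁ y₁ hy₁, horth x hx y₂ hy₂, add_zero]

end

theorem stmt_6_general {K E : Type*} [Field K]
    [AddCommGroup E] [Module K E]
    (B : E →ₗ[K] E →ₗ[K] K) (halt : ∀ x, B x x = 0)
    (hnd : ∀ x, (∀ y, B x y = 0) → x = 0)
    (u : E ≃ₗ[K] E) (hu : ∀ x y, B (u x) (u y) = B x y)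
    (d₁ d₂ : K[X]) (hcop : IsCoprime d₁ d₂)
    (c₂ : K)
    (hrev₂ : d₂.reverse = c₂ • d₂)
    (hmin : minpoly K (u : Module.End K E) = d₁ * d₂)
    (E₁ E₂ : Submodule K E)
    (hE₁ : E₁ = LinearMap.ker (aeval (u : Module.End K E) d₁))
    (hE₂ : E₂ = LinearMap.ker (aeval (u : Module.End K E) d₂)) :
    (∀ x ∈ E₁, u x ∈ E₁) ∧ (∀ x ∈ E₂, u x ∈ E₂) ∧
    IsCompl E₁ E₂ ∧
    (∀ x ∈ E₁, ∀ y ∈ E₂, B x y = 0) ∧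
    (∀ x ∈ E₁, (∀ y ∈ E₁, B x y = 0) → x = 0) ∧
    (∀ x ∈ E₂, (∀ y ∈ E₂, B x y = 0) → x = 0) := by
  subst hE₁ hE₂
  set U : Module.End K E := ↑u
  have hcompl := Module.End.isCompl_ker_aeval_of_isCoprime U hcop (hmin ▸ minpoly.aeval K U)
  have hadj : LinearMap.IsAdjointPair B B ⇑U ⇑(u.symm : Module.End K E) :=
    (LinearEquiv.isAdjointPair_symm_iff (f := u.toEquiv)).2 hu
  have h₁₂ (x) (hx : x ∈ LinearMap.ker (aeval U d₁)) (y) (hy : y ∈ LinearMap.ker (aeval U d₂)) :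
      B x y = 0 :=
    hadj.apply_eq_zero_of_isCoprime hcop hx
      (u.ker_aeval_le_ker_aeval_symm_of_reverse_eq_smul hrev₂ hy)
  have h₂₁ (y) (hy : y ∈ LinearMap.ker (aeval U d₂)) (x) (hx : x ∈ LinearMap.ker (aeval U d₁)) :
      B y x = 0 := by
    rw [← LinearMap.IsAlt.neg halt, h₁₂ x hx y hy, neg_zero]
  exact ⟨fun _ => U.apply_mem_ker_aeval d₁, fun _ => U.apply_mem_ker_aeval d₂, hcompl, h₁₂,
    fun _ => LinearMap.eq_zero_of_forall_mem_apply_eq_zero_of_sup_eq_top hnd hcompl.sup_eq_top h₁₂,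
    fun _ => LinearMap.eq_zero_of_forall_mem_apply_eq_zero_of_sup_eq_top hnd
      hcompl.symm.sup_eq_top h₂₁⟩

/-- If the minimal polynomial of a symplectic `u` factors as `d₁ * d₂` with `d₁, d₂` coprime and
`reverse dᵢ = cᵢ • dᵢ` (`cᵢ ≠ 0`), then `E` is the direct sum of the `u`-invariant subspaces
`E₁ = ker d₁(u)` and `E₂ = ker d₂(u)`, these are orthogonal to each other, and the form is
nondegenerate on each of them. -/
theorem stmt_6 {K E : Type*} [Field K] (hchar : (2 : K) ≠ 0)
    [AddCommGroup E] [Module K E] [FiniteDimensional K E]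
    (B : E →ₗ[K] E →ₗ[K] K) (halt : ∀ x, B x x = 0)
    (hnd : ∀ x, (∀ y, B x y = 0) → x = 0)
    (u : E ≃ₗ[K] E) (hu : ∀ x y, B (u x) (u y) = B x y)
    (d₁ d₂ : K[X]) (hcop : IsCoprime d₁ d₂)
    (c₁ c₂ : K) (hc₁ : c₁ ≠ 0) (hc₂ : c₂ ≠ 0)
    (hrev₁ : d₁.reverse = c₁ • d₁) (hrev₂ : d₂.reverse = c₂ • d₂)
    (hmin : minpoly K (u : Module.End K E) = d₁ * d₂)
    (E₁ E₂ : Submodule K E)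
    (hE₁ : E₁ = LinearMap.ker (aeval (u : Module.End K E) d₁))
    (hE₂ : E₂ = LinearMap.ker (aeval (u : Module.End K E) d₂)) :
    (∀ x ∈ E₁, u x ∈ E₁) ∧ (∀ x ∈ E₂, u x ∈ E₂) ∧
    IsCompl E₁ E₂ ∧
    (∀ x ∈ E₁, ∀ y ∈ E₂, B x y = 0) ∧
    (∀ x ∈ E₁, (∀ y ∈ E₁, B x y = 0) → x = 0) ∧
    (∀ x ∈ E₂, (∀ y ∈ E₂, B x y = 0) → x = 0) :=
  stmt_6_general B halt hnd u hu d₁ d₂ hcop c₂ hrev₂ hmin E₁ E₂ hE₁ hE₂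
end

section
/- Let p ∈ K[X] be monic irreducible with p(0) ≠ 0 such that reverse(p) is not a scalar multiple of p, let p̄₀ = p(0)⁻¹ • reverse(p) (a monic irreducible polynomial), and let u be a symplectic transformation of E with minimal polynomial p^k · p̄₀^k. Then E¹ = ker p(u)^k and E² = ker p̄₀(u)^k are totally isotropic subspaces (⟨x, y⟩ = 0 for all x, y in the subspace), E is the direct sum of E¹ and E², and dim_K E¹ = dim_K E² = (dim_K E)/2. -/
open Polynomial

-- adjoint lemma
theorem aux_adj {K E : Type*} [Field K] [AddCommGroup E] [Module K E]
    (B : E →ₗ[K] E →ₗ[K] K) (U V : Module.End K E)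
    (h : ∀ x y, B (U x) y = B x (V y)) (f : K[X]) (x y : E) :
    B ((aeval U f) x) y = B x ((aeval V f) y) := by
  have hn : ∀ n : ℕ, ∀ x y : E, B ((U ^ n) x) y = B x ((V ^ n) y) := by
    intro n
    induction n with
    | zero => intro x y; simp
    | succ n ih =>
      intro x y
      rw [pow_succ', pow_succ]
      rw [Module.End.mul_apply, Module.End.mul_apply, h, ih]
  induction f using Polynomial.induction_on' with
  | add f g hf hg => simp [hf, hg]
  | monomial n a =>
    simp only [aeval_monomial, Module.End.mul_apply, ← Algebra.smul_def,
      LinearMap.smul_apply, map_smul, LinearMap.smul_apply]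
    rw [hn]

-- reverse lemma
theorem aux_rev {K E : Type*} [Field K] [AddCommGroup E] [Module K E]
    (U V : Module.End K E) (h1 : U * V = 1) (h2 : V * U = 1) (f : K[X]) :
    aeval V f.reverse = V ^ f.natDegree * aeval U f := by
  have hc : Commute V U := by rw [Commute, SemiconjBy, h1, h2]
  have hVU : ∀ i : ℕ, V ^ i * U ^ i = 1 := fun i => by
    rw [← hc.mul_pow, h2, one_pow]
  have hrev : f.reverse.natDegree < f.natDegree + 1 :=
    lt_of_le_of_lt (by rw [reverse_natDegree]; omega) (Nat.lt_succ_self _)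
  rw [aeval_eq_sum_range' hrev, aeval_eq_sum_range' (Nat.lt_succ_self f.natDegree),
    Finset.mul_sum]
  rw [← Finset.sum_range_reflect]
  apply Finset.sum_congr rfl
  intro i hi
  rw [Finset.mem_range] at hi
  have hi' : i ≤ f.natDegree := Nat.lt_succ_iff.mp hi
  rw [coeff_reverse, revAt_le (by omega : f.natDegree + 1 - 1 - i ≤ f.natDegree)]
  rw [show f.natDegree + 1 - 1 - i = f.natDegree - i from by omega,
    show f.natDegree - (f.natDegree - i) = i from by omega]
  rw [mul_smul_comm]
  congr 1
  symm
  calc V ^ f.natDegree * U ^ i = V ^ (f.natDegree - i) * (V ^ i * U ^ i) := by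
        rw [← mul_assoc, ← pow_add]; congr 2; omega
    _ = V ^ (f.natDegree - i) := by rw [hVU, mul_one]


theorem aux_comm {K E : Type*} [Field K] [AddCommGroup E] [Module K E]
    (U V : Module.End K E) (h : Commute V U) (f : K[X]) : Commute V (aeval U f) := by
  induction f using Polynomial.induction_on' with
  | add f g hf hg => rw [map_add]; exact hf.add_right hg
  | monomial n a =>
    rw [aeval_monomial]
    exact (Algebra.commute_algebraMap_right a V).mul_right (h.pow_right n)

/-- If `u` is symplectic with minimal polynomial `p^k * p̄₀^k`, where `p` is monic irreducible
with `p(0) ≠ 0`, `reverse p` is not a scalar multiple of `p`, and `p̄₀ = p(0)⁻¹ • reverse p`,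
then `E¹ = ker p(u)^k` and `E² = ker p̄₀(u)^k` are totally isotropic, `E` is their direct sum,
and both have dimension `(dim E) / 2`. -/
theorem stmt_8 {K E : Type*} [Field K] (hchar : (2 : K) ≠ 0)
    [AddCommGroup E] [Module K E] [FiniteDimensional K E]
    (B : E →ₗ[K] E →ₗ[K] K) (halt : ∀ x, B x x = 0)
    (hnd : ∀ x, (∀ y, B x y = 0) → x = 0)
    (u : E ≃ₗ[K] E) (hu : ∀ x y, B (u x) (u y) = B x y)
    (p : K[X]) (hp : p.Monic) (hirr : Irreducible p) (hp0 : p.eval 0 ≠ 0)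
    (hns : ¬ ∃ c : K, p.reverse = c • p)
    (k : ℕ)
    (hmin : minpoly K (u : Module.End K E)
        = p ^ k * ((p.eval 0)⁻¹ • p.reverse) ^ k)
    (E₁ E₂ : Submodule K E)
    (hE₁ : E₁ = LinearMap.ker ((aeval (u : Module.End K E) p) ^ k))
    (hE₂ : E₂ = LinearMap.ker ((aeval (u : Module.End K E) ((p.eval 0)⁻¹ • p.reverse)) ^ k)) :
    (∀ x ∈ E₁, ∀ y ∈ E₁, B x y = 0) ∧
    (∀ x ∈ E₂, ∀ y ∈ E₂, B x y = 0) ∧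
    IsCompl E₁ E₂ ∧
    Module.finrank K E₁ = Module.finrank K E₂ ∧
    2 * Module.finrank K E₁ = Module.finrank K E := by
  classical
  set U : Module.End K E := (u : Module.End K E) with hUdef
  set V : Module.End K E := (u.symm : Module.End K E) with hVdef
  set q : K[X] := (p.eval 0)⁻¹ • p.reverse with hqdef
  set n : ℕ := p.natDegree with hndef
  have hUV : U * V = 1 := by
    ext x; simp [hUdef, hVdef, Module.End.mul_apply]
  have hVU : V * U = 1 := by
    ext x; simp [hUdef, hVdef, Module.End.mul_apply]
  have hcVU : Commute V U := by rw [Commute, SemiconjBy, hUV, hVU]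
  have hBV : ∀ x y, B (V x) y = B x (U y) := by
    intro x y
    have h := hu (u.symm x) y
    rw [u.apply_symm_apply] at h
    exact h.symm
  have hadjV : ∀ (f : K[X]) (x y : E), B ((aeval V f) x) y = B x ((aeval U f) y) :=
    aux_adj B V U hBV
  have hrev1 : aeval V p.reverse = V ^ n * aeval U p := aux_rev U V hUV hVU p
  have hrev2 : aeval U p.reverse = U ^ n * aeval V p := aux_rev V U hVU hUV p
  have hrevq : p.reverse = p.eval 0 • q := by
    rw [hqdef, smul_smul, mul_inv_cancel₀ hp0, one_smul]
  have hqV : aeval V q = (p.eval 0)⁻¹ • (V ^ n * aeval U p) := by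
    rw [hqdef, map_smul, hrev1]
  have hpV : aeval V p = V ^ n * (p.eval 0 • aeval U q) := by
    calc aeval V p = (V ^ n * U ^ n) * aeval V p := by
          rw [← hcVU.mul_pow, hVU, one_pow, one_mul]
      _ = V ^ n * (U ^ n * aeval V p) := mul_assoc _ _ _
      _ = V ^ n * aeval U p.reverse := by rw [← hrev2]
      _ = V ^ n * (p.eval 0 • aeval U q) := by rw [hrevq, map_smul]
  have key1 : ∀ x ∈ E₁, (aeval V (q ^ k)) x = 0 := by
    intro x hx
    rw [hE₁, LinearMap.mem_ker] at hx
    have hcm : Commute (V ^ n) (aeval U p) := (aux_comm U V hcVU p).pow_left n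
    have h : aeval V (q ^ k) = ((p.eval 0)⁻¹) ^ k • (V ^ (n * k) * (aeval U p) ^ k) := by
      rw [map_pow, hqV, _root_.smul_pow, hcm.mul_pow, pow_mul]
    rw [h, LinearMap.smul_apply, Module.End.mul_apply, hx, map_zero, smul_zero]
  have key2 : ∀ x ∈ E₂, (aeval V (p ^ k)) x = 0 := by
    intro x hx
    rw [hE₂, LinearMap.mem_ker] at hx
    have hcm : Commute (V ^ n) (aeval U q) := (aux_comm U V hcVU q).pow_left n
    have h : aeval V (p ^ k) = (p.eval 0) ^ k • (V ^ (n * k) * (aeval U q) ^ k) := by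
      rw [map_pow, hpV, mul_smul_comm, _root_.smul_pow, hcm.mul_pow, pow_mul]
    rw [h, LinearMap.smul_apply, Module.End.mul_apply, hx, map_zero, smul_zero]
  have hq0 : q ≠ 0 := by
    rw [hqdef]
    simp [smul_eq_zero, inv_eq_zero, hp0, reverse_eq_zero, hp.ne_zero]
  have hqdeg : q.natDegree ≤ n := by
    rw [hqdef]
    refine (natDegree_smul_le _ _).trans ?_
    rw [reverse_natDegree]; omega
  have hpq : ¬ p ∣ q := by
    rintro ⟨r, hr⟩
    have hr0 : r ≠ 0 := by
      rintro rfl; rw [mul_zero] at hr; exact hq0 hr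
    have hdeg : q.natDegree = p.natDegree + r.natDegree := by
      rw [hr, natDegree_mul hp.ne_zero hr0]
    have hrdeg : r.natDegree = 0 := by omega
    obtain ⟨c, rfl⟩ := natDegree_eq_zero.mp hrdeg
    refine hns ⟨p.eval 0 * c, ?_⟩
    rw [hrevq, hr, smul_eq_C_mul, smul_eq_C_mul, C_mul]
    ring
  have hcop : IsCoprime (p ^ k) (q ^ k) := (hirr.coprime_iff_not_dvd.mpr hpq).pow
  obtain ⟨a, b, hab⟩ := hcop
  have hmUzero : aeval U (p ^ k * q ^ k) = 0 := by
    rw [← hmin]; exact minpoly.aeval K U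
  have hdecomp : ∀ x : E, x = (aeval U (a * p ^ k)) x + (aeval U (b * q ^ k)) x := by
    intro x
    have h1 : aeval U (a * p ^ k) + aeval U (b * q ^ k) = 1 := by
      rw [← map_add, hab, map_one]
    have h2 := LinearMap.congr_fun h1 x
    simpa [LinearMap.add_apply] using h2.symm
  have hzero1 : ∀ x ∈ E₁, (aeval U (a * p ^ k)) x = 0 := by
    intro x hx
    rw [hE₁, LinearMap.mem_ker] at hx
    rw [map_mul, map_pow, Module.End.mul_apply, hx, map_zero]
  have hzero2 : ∀ x ∈ E₂, (aeval U (b * q ^ k)) x = 0 := by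
    intro x hx
    rw [hE₂, LinearMap.mem_ker] at hx
    rw [map_mul, map_pow, Module.End.mul_apply, hx, map_zero]
  have hmem1 : ∀ x : E, (aeval U (b * q ^ k)) x ∈ E₁ := by
    intro x
    rw [hE₁, LinearMap.mem_ker]
    have h0 : (aeval U p) ^ k * aeval U (b * q ^ k) = 0 := by
      rw [← map_pow, ← map_mul,
        show p ^ k * (b * q ^ k) = b * (p ^ k * q ^ k) by ring,
        map_mul, hmUzero, mul_zero]
    simpa [Module.End.mul_apply] using LinearMap.congr_fun h0 x
  have hmem2 : ∀ x : E, (aeval U (a * p ^ k)) x ∈ E₂ := by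
    intro x
    rw [hE₂, LinearMap.mem_ker]
    have h0 : (aeval U q) ^ k * aeval U (a * p ^ k) = 0 := by
      rw [← map_pow, ← map_mul,
        show q ^ k * (a * p ^ k) = a * (p ^ k * q ^ k) by ring,
        map_mul, hmUzero, mul_zero]
    simpa [Module.End.mul_apply] using LinearMap.congr_fun h0 x
  have hiso1 : ∀ x ∈ E₁, ∀ y ∈ E₁, B x y = 0 := by
    intro x hx y hy
    rw [hdecomp y, map_add, hzero1 y hy, map_zero, zero_add,
      ← hadjV (b * q ^ k) x y, map_mul, Module.End.mul_apply, key1 x hx, map_zero]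
    simp
  have hiso2 : ∀ x ∈ E₂, ∀ y ∈ E₂, B x y = 0 := by
    intro x hx y hy
    rw [hdecomp y, map_add, hzero2 y hy, map_zero, add_zero,
      ← hadjV (a * p ^ k) x y, map_mul, Module.End.mul_apply, key2 x hx, map_zero]
    simp
  have hcompl : IsCompl E₁ E₂ := by
    constructor
    · rw [Submodule.disjoint_def]
      intro x hx1 hx2
      rw [hdecomp x, hzero1 x hx1, hzero2 x hx2, add_zero]
    · rw [codisjoint_iff_le_sup]
      intro x _
      rw [Submodule.mem_sup]
      exact ⟨_, hmem1 x, _, hmem2 x, by rw [add_comm]; exact (hdecomp x).symm⟩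
  have hle : ∀ (S T : Submodule K E), S ⊔ T = ⊤ → (∀ x ∈ S, ∀ y ∈ S, B x y = 0) →
      Module.finrank K S ≤ Module.finrank K T := by
    intro S T hsup hiso
    set F : S →ₗ[K] Module.Dual K T := (B.compl₂ T.subtype).comp S.subtype with hF
    have hinj : Function.Injective F := by
      rw [← LinearMap.ker_eq_bot, eq_bot_iff]
      rintro ⟨x, hxS⟩ hx
      rw [LinearMap.mem_ker] at hx
      have hT : ∀ y ∈ T, B x y = 0 := by
        intro y hy
        simpa [hF] using LinearMap.congr_fun hx ⟨y, hy⟩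
      have hall : ∀ y, B x y = 0 := by
        intro y
        have hy' : y ∈ S ⊔ T := by rw [hsup]; exact Submodule.mem_top
        obtain ⟨s, hs, t, ht, rfl⟩ := Submodule.mem_sup.mp hy'
        rw [map_add, hiso x hxS s hs, hT t ht, add_zero]
      rw [Submodule.mem_bot]
      exact Subtype.ext (hnd x hall)
    have h1 := LinearMap.finrank_le_finrank_of_injective hinj
    rwa [Subspace.dual_finrank_eq] at h1
  have hle1 : Module.finrank K E₁ ≤ Module.finrank K E₂ :=
    hle E₁ E₂ hcompl.codisjoint.eq_top hiso1
  have hle2 : Module.finrank K E₂ ≤ Module.finrank K E₁ :=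
    hle E₂ E₁ (by rw [sup_comm]; exact hcompl.codisjoint.eq_top) hiso2
  have heq : Module.finrank K E₁ = Module.finrank K E₂ := le_antisymm hle1 hle2
  have hsum : Module.finrank K E₁ + Module.finrank K E₂ = Module.finrank K E :=
    Submodule.finrank_add_eq_of_isCompl hcompl
  exact ⟨hiso1, hiso2, hcompl, heq, by omega⟩
end

section
/- There exists a K-linear map l : R → K such that: (i) l is nondegenerate, i.e. if λ ∈ R satisfies l(λ·ρ) = 0 for all ρ ∈ R then λ = 0; and (ii) l(σ(ρ)) = ε·l(ρ) for all ρ ∈ R, where ε = -1 if deg q ≥ 2 and ε = (-1)^{m+1} if deg q = 1. -/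
/-!
Every nonzero element of `R = K[X]/(q^m)` divides `s₀ = q^(m-1)`, which generates the socle,
and `σ` is an involution. If `s` is an `ε`-eigenvector of `σ` in the socle and `l₀ s = 1`, then
`l = l₀ + ε • l₀ ∘ σ` satisfies `l ∘ σ = ε • l` and `l s = 2 ≠ 0`; since `s ∈ λ R` for every
`λ ≠ 0`, `l` is nondegenerate. Such an `s` is `y + ε • σ y` for a socle element `y`, provided
this is nonzero. If `deg q ≥ 2` (`ε = -1`), some `y = s₀ x` is moved by `σ`: otherwise
`ξ ≡ ξ⁻¹ (mod q)`, i.e. `q ∣ X² - 1`. If `q = X + c`, then `c² = 1` and `σ` acts on `s₀` by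
`(-1)^(m-1) = ε`, so `y = s₀` gives `2 s₀ ≠ 0`.
-/

open Polynomial

theorem Module.exists_dual_apply_ne_zero_of_involutive {K V : Type*} [Field K] [AddCommGroup V]
    [Module K V] (h2 : (2 : K) ≠ 0) {σ : V →ₗ[K] V} (hσ : Function.Involutive σ) {ε : K}
    (hε : ε * ε = 1) {s : V} (hs : s ≠ 0) (hσs : σ s = ε • s) :
    ∃ l : Module.Dual K V, l s ≠ 0 ∧ ∀ v, l (σ v) = ε * l v := by
  obtain ⟨l₀, hl₀⟩ := Module.Projective.exists_dual_eq_one K hs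
  refine ⟨l₀ + ε • l₀ ∘ₗ σ, ?_, fun v => ?_⟩
  · have : l₀ s + ε * l₀ (σ s) = 2 := by
      rw [hσs, map_smul, hl₀, smul_eq_mul, ← mul_assoc, hε]
      norm_num
    simpa [this] using h2
  · simp only [LinearMap.add_apply, LinearMap.smul_apply, LinearMap.comp_apply, smul_eq_mul,
      hσ v]
    linear_combination (-l₀ (σ v)) * hε

theorem exists_nondegenerate_form_comp_eq_smul {K A : Type*} [Field K] [Ring A] [Algebra K A]
    (h2 : (2 : K) ≠ 0) (σ : A ≃ₐ[K] A) (hσ : Function.Involutive σ) {ε : K} (hε : ε * ε = 1)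
    {y : A} (hy : ∀ a : A, a ≠ 0 → a ∣ y) (hyσ : y + ε • σ y ≠ 0) :
    ∃ l : A →ₗ[K] K, (∀ a, (∀ b, l (a * b) = 0) → a = 0) ∧ ∀ b, l (σ b) = ε * l b := by
  have hσs : σ (y + ε • σ y) = ε • (y + ε • σ y) := by
    rw [map_add, map_smul, hσ y, smul_add, smul_smul, hε, one_smul, add_comm]
  obtain ⟨l, hls, hlσ⟩ :=
    Module.exists_dual_apply_ne_zero_of_involutive (σ := σ.toLinearMap) h2 hσ hε hyσ hσs
  refine ⟨l, fun a ha => ?_, hlσ⟩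
  by_contra ha0
  obtain ⟨b, hb⟩ := hy a ha0
  obtain ⟨b', hb'⟩ : a ∣ σ y := by
    simpa only [hσ a] using map_dvd σ (hy (σ a) (by simpa using ha0))
  have hs : y + ε • σ y = a * (b + ε • b') := by rw [mul_add, mul_smul_comm, ← hb, ← hb']
  exact hls (hs ▸ ha _)

section PowerQuotient

variable {R : Type*} [CommRing R] [IsDomain R] {q : R} (n : ℕ)

theorem mk_pow_mul_eq_zero_iff_dvd (hq : q ≠ 0) (f : R) :
    Ideal.Quotient.mk (Ideal.span {q ^ (n + 1)}) (q ^ n * f) = 0 ↔ q ∣ f := by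
  rw [Ideal.Quotient.eq_zero_iff_mem, Ideal.mem_span_singleton, pow_succ,
    mul_dvd_mul_iff_left (pow_ne_zero n hq)]

theorem dvd_mk_pow_of_ne_zero [IsPrincipalIdealRing R] (hq : Irreducible q)
    {a : R ⧸ Ideal.span {q ^ (n + 1)}} (ha : a ≠ 0) : a ∣ Ideal.Quotient.mk _ (q ^ n) := by
  obtain ⟨f, rfl⟩ := Ideal.Quotient.mk_surjective a
  have hf : ¬ q ^ (n + 1) ∣ f := by
    rwa [Ne, Ideal.Quotient.eq_zero_iff_mem, Ideal.mem_span_singleton] at ha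
  obtain ⟨g, hfg, hg⟩ := (FiniteMultiplicity.of_prime_left (b := f) hq.prime
    (by rintro rfl; exact hf (dvd_zero _))).exists_eq_pow_mul_and_not_dvd
  set i := multiplicity q f
  have hi : i ≤ n := by
    by_contra! hi
    exact hf (hfg ▸ (pow_dvd_pow q hi).mul_right g)
  obtain ⟨u, v, huv⟩ := hq.coprime_pow_of_not_dvd (n + 1) hg
  have hsplit : q ^ i * q ^ (n - i) = q ^ n := by rw [← pow_add, Nat.add_sub_cancel' hi]
  refine ⟨Ideal.Quotient.mk _ (u * q ^ (n - i)), ?_⟩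
  rw [← map_mul, Ideal.Quotient.eq, Ideal.mem_span_singleton, hfg]
  exact ⟨v * q ^ n, by linear_combination -(q ^ n) * huv - g * u * hsplit⟩

end PowerQuotient

theorem involutive_of_apply_mk_X_mul_mk_X_eq_one {K : Type*} [CommRing K] {I : Ideal K[X]}
    (σ : (K[X] ⧸ I) ≃ₐ[K] (K[X] ⧸ I))
    (hσ : σ (Ideal.Quotient.mk I X) * Ideal.Quotient.mk I X = 1) : Function.Involutive σ := by
  suffices σ.toAlgHom.comp σ.toAlgHom = AlgHom.id K _ from AlgHom.congr_fun this
  refine Ideal.Quotient.algHom_ext _ (Polynomial.algHom_ext ?_)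
  have h1 : σ (σ (Ideal.Quotient.mk I X)) * σ (Ideal.Quotient.mk I X) = 1 := by
    rw [← map_mul, hσ, map_one]
  exact left_inv_eq_right_inv h1 hσ

theorem Polynomial.Monic.eq_X_add_C_of_reverse_eq_smul {K : Type*} [CommRing K] {q : K[X]}
    (hq : q.Monic) (h1 : q.natDegree = 1) {c : K} (hrev : q.reverse = c • q) :
    q = X + C c ∧ c * c = 1 := by
  have hc0 := congrArg (coeff · 0) hrev
  have hc1 := congrArg (coeff · 1) hrev
  simp only [coeff_reverse, coeff_smul, smul_eq_mul, h1, revAt_le zero_le_one, revAt_le le_rfl,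
    Nat.sub_zero, Nat.sub_self] at hc0 hc1
  have hlead : q.coeff 1 = 1 := h1 ▸ hq.coeff_natDegree
  rw [hlead, mul_one] at hc1
  rw [hlead, hc1] at hc0
  exact ⟨hc1 ▸ hq.eq_X_add_C h1, hc0.symm⟩

theorem exists_apply_mk_pow_mul_ne_of_two_le_natDegree {K : Type*} [Field K] {q : K[X]}
    (hq : Irreducible q) (hdeg : 2 ≤ q.natDegree) (n : ℕ)
    (σ : (K[X] ⧸ Ideal.span {q ^ (n + 1)}) ≃ₐ[K] (K[X] ⧸ Ideal.span {q ^ (n + 1)}))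
    (hσ : σ (Ideal.Quotient.mk _ X) * Ideal.Quotient.mk _ X = 1) :
    ∃ x, σ (Ideal.Quotient.mk _ (q ^ n) * x) ≠ Ideal.Quotient.mk _ (q ^ n) * x := by
  set mk := Ideal.Quotient.mk (Ideal.span {q ^ (n + 1)})
  by_contra! hfix
  have h1 : σ (mk (q ^ n)) = mk (q ^ n) := by simpa using hfix 1
  have hzero : mk (q ^ n * (X * X - 1)) = 0 :=
    calc mk (q ^ n * (X * X - 1)) = mk (q ^ n) * mk X * mk X - mk (q ^ n) := by
          simp only [map_mul, map_sub, map_one]; ring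
      _ = σ (mk (q ^ n)) * (σ (mk X) * mk X) - mk (q ^ n) := by rw [← hfix, map_mul, mul_assoc]
      _ = 0 := by rw [hσ, mul_one, h1, sub_self]
  have hfac : (X * X - 1 : K[X]) = (X - C 1) * (X - C (-1)) := by
    simp only [map_one, map_neg]; ring
  have hdvd := (mk_pow_mul_eq_zero_iff_dvd n hq.ne_zero _).mp hzero
  rw [hfac] at hdvd
  rcases hq.prime.dvd_or_dvd hdvd with h | h <;>
  · have := natDegree_le_of_dvd h (X_sub_C_ne_zero _)
    rw [natDegree_X_sub_C] at this
    omega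

theorem apply_mk_X_add_C_pow_eq_neg_one_pow_mul {K : Type*} [CommRing K] {c : K}
    (hc : c * c = 1) (n : ℕ)
    (σ : (K[X] ⧸ Ideal.span {(X + C c) ^ (n + 1)}) ≃ₐ[K] (K[X] ⧸ Ideal.span {(X + C c) ^ (n + 1)}))
    (hσ : σ (Ideal.Quotient.mk (Ideal.span {(X + C c) ^ (n + 1)}) X)
        * Ideal.Quotient.mk _ X = 1) :
    σ (Ideal.Quotient.mk (Ideal.span {(X + C c) ^ (n + 1)}) ((X + C c) ^ n)) =
      (-1) ^ n * Ideal.Quotient.mk (Ideal.span {(X + C c) ^ (n + 1)}) ((X + C c) ^ n) := by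
  set mk := Ideal.Quotient.mk (Ideal.span {(X + C c) ^ (n + 1)})
  set a := algebraMap K (K[X] ⧸ Ideal.span {(X + C c) ^ (n + 1)}) c
  have haa : a * a = 1 := by rw [← map_mul, hc, map_one]
  have hQ : mk (X + C c) = mk X + a := by rw [map_add]; rfl
  have hann : mk (X + C c) ^ n * (mk X + a) = 0 := by
    rw [← hQ, ← pow_succ, ← map_pow, Ideal.Quotient.eq_zero_iff_mem]
    exact Ideal.mem_span_singleton_self _
  -- `σ (ξ + c) = ξ⁻¹ + c = c ξ⁻¹ (ξ + c)`, and `c ξ⁻¹` acts on the socle as `c (-c)⁻¹ = -1`.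
  have hσQ : σ (mk (X + C c)) = a * σ (mk X) * mk (X + C c) := by
    rw [hQ, map_add, AlgEquiv.commutes]
    linear_combination (-a) * hσ - σ (mk X) * haa
  have hu : a * σ (mk X) * mk (X + C c) ^ n = -mk (X + C c) ^ n := by
    linear_combination σ (mk X) * hann - mk (X + C c) ^ n * hσ
  have hpow (k : ℕ) : (a * σ (mk X)) ^ k * mk (X + C c) ^ n = (-1) ^ k * mk (X + C c) ^ n := by
    induction k with
    | zero => simp
    | succ k ih => rw [pow_succ' (a * σ (mk X)), mul_assoc, ih, mul_left_comm, hu]; ring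
  rw [map_pow, map_pow, hσQ, mul_pow, hpow]

/-- On `R = K[X]/(q^m)` with its involutory automorphism `σ` (induced by `X ↦ X⁻¹`), there is
a nondegenerate `K`-linear form `l : R → K` with `l (σ ρ) = ε * l ρ`, where `ε = -1` if
`deg q ≥ 2` and `ε = (-1)^(m+1)` if `deg q = 1`. -/
theorem stmt_12 {K : Type*} [Field K] (hchar : (2 : K) ≠ 0)
    (q : K[X]) (hq : q.Monic) (hirr : Irreducible q)
    (c : K) (hrev : q.reverse = c • q) (m : ℕ) (hm : 1 ≤ m)
    (σ : (K[X] ⧸ Ideal.span {q ^ m}) ≃ₐ[K] (K[X] ⧸ Ideal.span {q ^ m}))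
    (hσ : σ (Ideal.Quotient.mk (Ideal.span {q ^ m}) X)
        * Ideal.Quotient.mk (Ideal.span {q ^ m}) X = 1)
    (ε : K) (hε : (2 ≤ q.natDegree ∧ ε = -1) ∨ (q.natDegree = 1 ∧ ε = (-1) ^ (m + 1))) :
    ∃ l : (K[X] ⧸ Ideal.span {q ^ m}) →ₗ[K] K,
      (∀ lam, (∀ ρ, l (lam * ρ) = 0) → lam = 0) ∧
      (∀ ρ, l (σ ρ) = ε * l ρ) := by
  obtain ⟨n, rfl⟩ : ∃ n, m = n + 1 := ⟨m - 1, by omega⟩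
  have hinv := involutive_of_apply_mk_X_mul_mk_X_eq_one σ hσ
  have hsocle := fun a (ha : a ≠ 0) => dvd_mk_pow_of_ne_zero n hirr ha
  rcases hε with ⟨hdeg, rfl⟩ | ⟨hdeg, rfl⟩
  · obtain ⟨x, hx⟩ := exists_apply_mk_pow_mul_ne_of_two_le_natDegree hirr hdeg n σ hσ
    refine exists_nondegenerate_form_comp_eq_smul hchar σ hinv (by norm_num)
      (fun a ha => (hsocle a ha).mul_right x) ?_
    rwa [neg_one_smul, ← sub_eq_add_neg, sub_ne_zero, ne_comm]
  · obtain ⟨rfl, hc⟩ := hq.eq_X_add_C_of_reverse_eq_smul hdeg hrev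
    have hy : Ideal.Quotient.mk (Ideal.span {(X + C c) ^ (n + 1)}) ((X + C c) ^ n) ≠ 0 := by
      simpa using (mk_pow_mul_eq_zero_iff_dvd n hirr.ne_zero 1).not.mpr
        (hirr.not_isUnit ∘ isUnit_of_dvd_one)
    refine exists_nondegenerate_form_comp_eq_smul hchar σ hinv
      (by rw [← mul_pow]; norm_num) hsocle ?_
    rw [apply_mk_X_add_C_pow_eq_neg_one_pow_mul hc n σ hσ, Algebra.smul_def,
      map_pow (algebraMap K _), map_neg, map_one, ← mul_assoc, ← pow_add,
      Even.neg_one_pow (α := K[X] ⧸ Ideal.span {(X + C c) ^ (n + 1)}) ⟨n + 1, by ring⟩,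
      one_mul, ← two_smul K]
    exact smul_ne_zero hchar hy
end

section
/- Let u be a symplectic transformation of E with minimal polynomial q^m, regard E as an R-module via ρ·x = g(u)(x) for ρ the class of g ∈ K[X], and let l : R → K be a K-linear map which is nondegenerate (l(λρ) = 0 for all ρ implies λ = 0) and satisfies l(σ(ρ)) = ε·l(ρ) for all ρ, where ε = -1 if deg q ≥ 2 and ε = (-1)^{m+1} if deg q = 1. Then there exists a map f : E × E → R such that: f is additive in each variable; f(ρ·x, y) = ρ·f(x, y) for all ρ ∈ R; f(x, y) = -ε·σ(f(y, x)) for all x, y; l(ρ·f(x, y)) = ⟨ρ·x, y⟩ for all ρ ∈ R and x, y ∈ E; and f is nondegenerate (f(x, y) = 0 for all y implies x = 0). -/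
/-! Since `l` is nondegenerate and `R` is finite-dimensional, `r ↦ l (r * ·)` identifies `R`
with its `K`-dual, so there is a unique `f x y : R` with `l (f x y * ρ) = ⟨ρ • x, y⟩` for all `ρ`,
and every identity for `f` can be checked after pairing with `l (· * ρ)`. The `ε`-symmetry comes
from `σ` being the adjoint involution: `ξ` acts as `u` and `σ ξ = ξ⁻¹` as `u⁻¹`, which is the
adjoint of `u` for the symplectic form, so `⟨ρ • x, y⟩ = ⟨x, σ ρ • y⟩`; skew-symmetry of `⟨·,·⟩`,
`l ∘ σ = ε • l` and `ε² = 1` then give `f x y = -ε • σ (f y x)`. -/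

open Polynomial LinearMap

section NondegenerateForm

variable {K R E : Type*} [Field K] [CommRing R] [Algebra K R] [FiniteDimensional K R]
  [AddCommGroup E] [Module K E] {l : R →ₗ[K] K}

noncomputable def mulDualEquiv (l : R →ₗ[K] K) (hl : ∀ r, (∀ ρ, l (r * ρ) = 0) → r = 0) :
    R ≃ₗ[K] Module.Dual K R :=
  ((LinearMap.mul K R).compr₂ l).linearEquivOfInjective
    (by
      rw [← ker_eq_bot, ker_eq_bot']
      exact fun r hr => hl r fun ρ => LinearMap.congr_fun hr ρ)
    Subspace.dual_finrank_eq.symm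

theorem mulDualEquiv_apply (hl : ∀ r, (∀ ρ, l (r * ρ) = 0) → r = 0) (r ρ : R) :
    mulDualEquiv l hl r ρ = l (r * ρ) :=
  rfl

theorem eq_of_forall_apply_mul_eq (hl : ∀ r, (∀ ρ, l (r * ρ) = 0) → r = 0) {r s : R}
    (h : ∀ ρ, l (r * ρ) = l (s * ρ)) : r = s :=
  (mulDualEquiv l hl).injective (LinearMap.ext h)

variable (A : R →ₐ[K] Module.End K E) (B : E →ₗ[K] E →ₗ[K] K)

def actionPairing : E →ₗ[K] E →ₗ[K] Module.Dual K R :=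
  LinearMap.mk₂ K (fun x y => B.flip y ∘ₗ applyₗ x ∘ₗ A.toLinearMap)
    (fun _ _ _ => by ext; simp) (fun _ _ _ => by ext; simp)
    (fun _ _ _ => by ext; simp) (fun _ _ _ => by ext; simp)

noncomputable def liftForm (l : R →ₗ[K] K) (hl : ∀ r, (∀ ρ, l (r * ρ) = 0) → r = 0) :
    E →ₗ[K] E →ₗ[K] R :=
  (actionPairing A B).compr₂ (mulDualEquiv l hl).symm.toLinearMap

variable {A B}
variable (hl : ∀ r, (∀ ρ, l (r * ρ) = 0) → r = 0)

theorem apply_liftForm_mul (x y : E) (ρ : R) : l (liftForm A B l hl x y * ρ) = B (A ρ x) y := by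
  rw [← mulDualEquiv_apply hl, liftForm, compr₂_apply, LinearEquiv.coe_coe,
    LinearEquiv.apply_symm_apply]
  rfl

theorem liftForm_map_left (ρ : R) (x y : E) :
    liftForm A B l hl (A ρ x) y = ρ * liftForm A B l hl x y :=
  eq_of_forall_apply_mul_eq hl fun ρ' => by
    rw [apply_liftForm_mul, mul_comm ρ, mul_assoc, apply_liftForm_mul, mul_comm ρ, map_mul,
      Module.End.mul_apply]

theorem liftForm_eq_smul_map_liftForm {σ : R ≃ₐ[K] R} (hσ : Function.Involutive σ) {ε : K}
    (hε : ε * ε = 1) (hlσ : ∀ ρ, l (σ ρ) = ε * l ρ) (hB : B.IsAlt)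
    (hadj : ∀ ρ, IsAdjointPair B B (A ρ) (A (σ ρ))) (x y : E) :
    liftForm A B l hl x y = (-ε) • σ (liftForm A B l hl y x) :=
  eq_of_forall_apply_mul_eq hl fun ρ => calc
    l (liftForm A B l hl x y * ρ) = B x (A (σ ρ) y) := by rw [apply_liftForm_mul, hadj]
    _ = -(ε * ε) * l (liftForm A B l hl y x * σ ρ) := by
      rw [hε, apply_liftForm_mul, ← hB.neg]; ring
    _ = -ε * l (σ (liftForm A B l hl y x) * ρ) := by
      rw [← hσ ρ, ← map_mul, hlσ, hσ ρ]; ring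
    _ = l ((-ε) • σ (liftForm A B l hl y x) * ρ) := by
      rw [smul_mul_assoc, map_smul, smul_eq_mul]

theorem eq_zero_of_forall_liftForm_eq_zero (hB : ∀ x, (∀ y, B x y = 0) → x = 0) {x : E}
    (hx : ∀ y, liftForm A B l hl x y = 0) : x = 0 :=
  hB x fun y => by
    simpa [hx] using (apply_liftForm_mul (A := A) (B := B) hl x y 1).symm

end NondegenerateForm

section PolynomialQuotient

variable {K E : Type*} [Field K] [AddCommGroup E] [Module K E] {I : Ideal K[X]}

local notation "ξ" => Ideal.Quotient.mk I X

theorem AlgEquiv.involutive_of_map_X_mul_X_eq_one {σ : (K[X] ⧸ I) ≃ₐ[K] (K[X] ⧸ I)}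
    (hσ : σ ξ * ξ = 1) : Function.Involutive σ := by
  have hσσ : σ (σ ξ) = ξ := left_inv_eq_right_inv (by rw [← map_mul, hσ, map_one]) hσ
  have h : σ.toAlgHom.comp σ.toAlgHom = AlgHom.id K _ :=
    Ideal.Quotient.algHom_ext K (Polynomial.algHom_ext (by simpa using hσσ))
  exact fun ρ => AlgHom.congr_fun h ρ

theorem isAdjointPair_of_isAdjointPair_mk_X {B : E →ₗ[K] E →ₗ[K] K}
    {A : (K[X] ⧸ I) →ₐ[K] Module.End K E} {σ : (K[X] ⧸ I) ≃ₐ[K] (K[X] ⧸ I)}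
    (hX : IsAdjointPair B B (A ξ) (A (σ ξ))) (ρ : K[X] ⧸ I) :
    IsAdjointPair B B (A ρ) (A (σ ρ)) := by
  obtain ⟨g, rfl⟩ := Ideal.Quotient.mk_surjective ρ
  induction g using Polynomial.induction_on with
  | C a =>
    have hC : Ideal.Quotient.mk I (C a) = algebraMap K _ a := rfl
    simpa [hC, Algebra.algebraMap_eq_smul_one] using (isAdjointPair_one (B := B)).smul a
  | add p r hp hr =>
    rw [map_add, map_add, map_add, map_add]
    exact hp.add hr
  | monomial n a ih =>
    have hmul :
        Ideal.Quotient.mk I (C a * X ^ (n + 1)) = Ideal.Quotient.mk I (C a * X ^ n) * ξ := by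
      rw [pow_succ, ← mul_assoc, map_mul]
    rw [hmul]
    generalize Ideal.Quotient.mk I (C a * X ^ n) = ρ at ih ⊢
    rw [map_mul σ, mul_comm (σ ρ), map_mul A, map_mul A]
    exact ih.mul hX

theorem isAdjointPair_mk_X_of_isOrthogonal {B : E →ₗ[K] E →ₗ[K] K}
    {A : (K[X] ⧸ I) →ₐ[K] Module.End K E} {σ : (K[X] ⧸ I) ≃ₐ[K] (K[X] ⧸ I)}
    (hσ : σ ξ * ξ = 1) (hA : B.IsOrthogonal (A ξ)) :
    IsAdjointPair B B (A ξ) (A (σ ξ)) := fun x y => by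
  have hy : A ξ (A (σ ξ) y) = y := by
    rw [← Module.End.mul_apply, ← map_mul, mul_comm, hσ, map_one, Module.End.one_apply]
  rw [← hA x (A (σ ξ) y), hy]

end PolynomialQuotient

theorem stmt_13_general {K E : Type*} [Field K]
    [AddCommGroup E] [Module K E]
    (B : E →ₗ[K] E →ₗ[K] K) (halt : ∀ x, B x x = 0)
    (hnd : ∀ x, (∀ y, B x y = 0) → x = 0)
    (q : K[X]) (hq : q.Monic) (m : ℕ)
    (u : E ≃ₗ[K] E) (hu : ∀ x y, B (u x) (u y) = B x y)
    (hmin : minpoly K (u : Module.End K E) = q ^ m)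
    (σ : (K[X] ⧸ Ideal.span {q ^ m}) ≃ₐ[K] (K[X] ⧸ Ideal.span {q ^ m}))
    (hσ : σ (Ideal.Quotient.mk (Ideal.span {q ^ m}) X)
        * Ideal.Quotient.mk (Ideal.span {q ^ m}) X = 1)
    (ε : K) (hε : (2 ≤ q.natDegree ∧ ε = -1) ∨ (q.natDegree = 1 ∧ ε = (-1) ^ (m + 1)))
    (l : (K[X] ⧸ Ideal.span {q ^ m}) →ₗ[K] K)
    (hlnd : ∀ lam, (∀ ρ, l (lam * ρ) = 0) → lam = 0)
    (hlσ : ∀ ρ, l (σ ρ) = ε * l ρ) :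
    ∃ f : E → E → (K[X] ⧸ Ideal.span {q ^ m}),
      (∀ x₁ x₂ y, f (x₁ + x₂) y = f x₁ y + f x₂ y) ∧
      (∀ x y₁ y₂, f x (y₁ + y₂) = f x y₁ + f x y₂) ∧
      (∀ (g : K[X]) (x y : E), f (aeval (u : Module.End K E) g x) y
          = Ideal.Quotient.mk (Ideal.span {q ^ m}) g * f x y) ∧
      (∀ x y, f x y = (-ε) • σ (f y x)) ∧
      (∀ (g : K[X]) (x y : E), l (Ideal.Quotient.mk (Ideal.span {q ^ m}) g * f x y)
          = B (aeval (u : Module.End K E) g x) y) ∧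
      (∀ x, (∀ y, f x y = 0) → x = 0) := by
  have : Module.Finite K (K[X] ⧸ Ideal.span {q ^ m}) := (hq.pow m).finite_quotient
  let A := Ideal.Quotient.liftₐ (Ideal.span {q ^ m}) (aeval (u : Module.End K E))
    fun g hg => minpoly.dvd_iff.mp (hmin ▸ Ideal.mem_span_singleton.mp hg)
  have hA (g : K[X]) : A (Ideal.Quotient.mk _ g) = aeval (u : Module.End K E) g := rfl
  have hadj := isAdjointPair_of_isAdjointPair_mk_X
    (isAdjointPair_mk_X_of_isOrthogonal (A := A) hσ fun x y => by simpa [hA] using hu x y)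
  have hεε : ε * ε = 1 := by
    rcases hε with ⟨-, rfl⟩ | ⟨-, rfl⟩
    · ring
    · rw [← pow_add, ← two_mul, pow_mul, neg_one_sq, one_pow]
  refine ⟨fun x y => liftForm A B l hlnd x y, fun x₁ x₂ y => by simp, fun x y₁ y₂ => by simp,
    fun g x y => by rw [← hA]; exact liftForm_map_left hlnd _ x y, ?_,
    fun g x y => by rw [mul_comm, apply_liftForm_mul, hA],
    fun x => eq_zero_of_forall_liftForm_eq_zero hlnd hnd⟩
  exact liftForm_eq_smul_map_liftForm hlnd (σ.involutive_of_map_X_mul_X_eq_one hσ) hεε hlσ halt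
    hadj

/-- For a symplectic `u` with minimal polynomial `q^m` (`q` monic irreducible,
`reverse q = c • q`), regarding `E` as a module over `R = K[X]/(q^m)` via
`(mk g) • x = g(u) x`, and given a nondegenerate `K`-linear form `l : R → K` with
`l (σ ρ) = ε * l ρ`, there is a nondegenerate sesquilinear form `f : E × E → R` with
`f (ρ • x) y = ρ * f x y`, `f x y = -ε • σ (f y x)` and `l (ρ * f x y) = ⟨ρ • x, y⟩`. -/
theorem stmt_13 {K E : Type*} [Field K] (hchar : (2 : K) ≠ 0)
    [AddCommGroup E] [Module K E] [FiniteDimensional K E]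
    (B : E →ₗ[K] E →ₗ[K] K) (halt : ∀ x, B x x = 0)
    (hnd : ∀ x, (∀ y, B x y = 0) → x = 0)
    (q : K[X]) (hq : q.Monic) (hirr : Irreducible q)
    (c : K) (hrev : q.reverse = c • q) (m : ℕ) (hm : 1 ≤ m)
    (u : E ≃ₗ[K] E) (hu : ∀ x y, B (u x) (u y) = B x y)
    (hmin : minpoly K (u : Module.End K E) = q ^ m)
    (σ : (K[X] ⧸ Ideal.span {q ^ m}) ≃ₐ[K] (K[X] ⧸ Ideal.span {q ^ m}))
    (hσ : σ (Ideal.Quotient.mk (Ideal.span {q ^ m}) X)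
        * Ideal.Quotient.mk (Ideal.span {q ^ m}) X = 1)
    (ε : K) (hε : (2 ≤ q.natDegree ∧ ε = -1) ∨ (q.natDegree = 1 ∧ ε = (-1) ^ (m + 1)))
    (l : (K[X] ⧸ Ideal.span {q ^ m}) →ₗ[K] K)
    (hlnd : ∀ lam, (∀ ρ, l (lam * ρ) = 0) → lam = 0)
    (hlσ : ∀ ρ, l (σ ρ) = ε * l ρ) :
    ∃ f : E → E → (K[X] ⧸ Ideal.span {q ^ m}),
      (∀ x₁ x₂ y, f (x₁ + x₂) y = f x₁ y + f x₂ y) ∧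
      (∀ x y₁ y₂, f x (y₁ + y₂) = f x y₁ + f x y₂) ∧
      (∀ (g : K[X]) (x y : E), f (aeval (u : Module.End K E) g x) y
          = Ideal.Quotient.mk (Ideal.span {q ^ m}) g * f x y) ∧
      (∀ x y, f x y = (-ε) • σ (f y x)) ∧
      (∀ (g : K[X]) (x y : E), l (Ideal.Quotient.mk (Ideal.span {q ^ m}) g * f x y)
          = B (aeval (u : Module.End K E) g x) y) ∧
      (∀ x, (∀ y, f x y = 0) → x = 0) :=
  stmt_13_general B halt hnd q hq m u hu hmin σ hσ ε hε l hlnd hlσ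
end

section
/- Let u and u' be symplectic transformations of E, both with minimal polynomial q^m, let l : R → K be a fixed nondegenerate K-linear map with l(σ(ρ)) = ε·l(ρ) for all ρ (ε = -1 if deg q ≥ 2, ε = (-1)^{m+1} if deg q = 1), and let f (respectively f') be a map E × E → R which is additive in each variable, satisfies f(ρ·x, y) = ρ·f(x, y) and f(x, y) = -ε·σ(f(y, x)), and satisfies l(ρ·f(x, y)) = ⟨ρ·x, y⟩, where the R-module structure is the one determined by u (respectively by u'). Then there exists a symplectic transformation w of E with u' = w⁻¹ ∘ u ∘ w if and only if there exists a K-linear automorphism t of E with t ∘ u' = u ∘ t and f(t(x), t(y)) = f'(x, y) for all x, y ∈ E. -/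
open Polynomial

/-- Two symplectic transformations `u`, `u'` with the same minimal polynomial `q^m`, with
associated sesquilinear forms `f`, `f'` (relative to a fixed nondegenerate `K`-linear form `l`
on `R = K[X]/(q^m)` compatible with the involution `σ`), are conjugate in the symplectic group
iff there is a linear automorphism `t` of `E` with `t ∘ u' = u ∘ t` and
`f (t x) (t y) = f' x y`. -/
theorem stmt_14 {K E : Type*} [Field K] (hchar : (2 : K) ≠ 0)
    [AddCommGroup E] [Module K E] [FiniteDimensional K E]
    (B : E →ₗ[K] E →ₗ[K] K) (halt : ∀ x, B x x = 0)
    (hnd : ∀ x, (∀ y, B x y = 0) → x = 0)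
    (q : K[X]) (hq : q.Monic) (hirr : Irreducible q)
    (c : K) (hrev : q.reverse = c • q) (m : ℕ) (hm : 1 ≤ m)
    (u u' : E ≃ₗ[K] E)
    (hu : ∀ x y, B (u x) (u y) = B x y) (hu' : ∀ x y, B (u' x) (u' y) = B x y)
    (hmin : minpoly K (u : Module.End K E) = q ^ m)
    (hmin' : minpoly K (u' : Module.End K E) = q ^ m)
    (σ : (K[X] ⧸ Ideal.span {q ^ m}) ≃ₐ[K] (K[X] ⧸ Ideal.span {q ^ m}))
    (hσ : σ (Ideal.Quotient.mk (Ideal.span {q ^ m}) X)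
        * Ideal.Quotient.mk (Ideal.span {q ^ m}) X = 1)
    (ε : K) (hε : (2 ≤ q.natDegree ∧ ε = -1) ∨ (q.natDegree = 1 ∧ ε = (-1) ^ (m + 1)))
    (l : (K[X] ⧸ Ideal.span {q ^ m}) →ₗ[K] K)
    (hlnd : ∀ lam, (∀ ρ, l (lam * ρ) = 0) → lam = 0)
    (hlσ : ∀ ρ, l (σ ρ) = ε * l ρ)
    (f f' : E → E → (K[X] ⧸ Ideal.span {q ^ m}))
    (hf_add₁ : ∀ x₁ x₂ y, f (x₁ + x₂) y = f x₁ y + f x₂ y)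
    (hf_add₂ : ∀ x y₁ y₂, f x (y₁ + y₂) = f x y₁ + f x y₂)
    (hf_lin : ∀ (g : K[X]) (x y : E), f (aeval (u : Module.End K E) g x) y
        = Ideal.Quotient.mk (Ideal.span {q ^ m}) g * f x y)
    (hf_herm : ∀ x y, f x y = (-ε) • σ (f y x))
    (hf_l : ∀ (g : K[X]) (x y : E), l (Ideal.Quotient.mk (Ideal.span {q ^ m}) g * f x y)
        = B (aeval (u : Module.End K E) g x) y)
    (hf'_add₁ : ∀ x₁ x₂ y, f' (x₁ + x₂) y = f' x₁ y + f' x₂ y)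
    (hf'_add₂ : ∀ x y₁ y₂, f' x (y₁ + y₂) = f' x y₁ + f' x y₂)
    (hf'_lin : ∀ (g : K[X]) (x y : E), f' (aeval (u' : Module.End K E) g x) y
        = Ideal.Quotient.mk (Ideal.span {q ^ m}) g * f' x y)
    (hf'_herm : ∀ x y, f' x y = (-ε) • σ (f' y x))
    (hf'_l : ∀ (g : K[X]) (x y : E), l (Ideal.Quotient.mk (Ideal.span {q ^ m}) g * f' x y)
        = B (aeval (u' : Module.End K E) g x) y) :
    (∃ w : E ≃ₗ[K] E, (∀ x y, B (w x) (w y) = B x y) ∧ ∀ x, u' x = w.symm (u (w x))) ↔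
      (∃ t : E ≃ₗ[K] E, (∀ x, t (u' x) = u (t x)) ∧ ∀ x y, f (t x) (t y) = f' x y) := by

  constructor
  · rintro ⟨w, hw, hwu⟩
    refine ⟨w, fun x => ?_, fun x y => ?_⟩
    · rw [hwu x, w.apply_symm_apply]
    · -- first: aeval commutes
      have hcomm : ∀ x, w (u' x) = u (w x) := by
        intro x; rw [hwu x, w.apply_symm_apply]
      have hpow : ∀ (n : ℕ) (x : E), ((u : Module.End K E) ^ n) (w x)
          = w (((u' : Module.End K E) ^ n) x) := by
        intro n
        induction n with
        | zero => intro x; simp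
        | succ n ih =>
          intro x
          rw [pow_succ, pow_succ]
          simp only [Module.End.mul_apply, LinearEquiv.coe_coe]
          rw [← hcomm x]
          exact ih _
      have haev : ∀ (g : K[X]) (x : E),
          aeval (u : Module.End K E) g (w x) = w (aeval (u' : Module.End K E) g x) := by
        intro g
        induction g using Polynomial.induction_on' with
        | add p r hp hr =>
          intro x
          simp only [map_add, LinearMap.add_apply, hp x, hr x, map_add]
        | monomial n a =>
          intro x
          simp only [Polynomial.aeval_monomial, Module.End.mul_apply,
            Module.algebraMap_end_apply]
          rw [hpow n x, map_smul]
      -- uniqueness from l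
      have huniq : ∀ a b : K[X] ⧸ Ideal.span {q ^ m},
          (∀ g : K[X], l (Ideal.Quotient.mk (Ideal.span {q ^ m}) g * a)
            = l (Ideal.Quotient.mk (Ideal.span {q ^ m}) g * b)) → a = b := by
        intro a b h
        have : a - b = 0 := by
          apply hlnd
          intro ρ
          obtain ⟨g, rfl⟩ := Ideal.Quotient.mk_surjective ρ
          rw [mul_comm, mul_sub, map_sub, h g, sub_self]
        exact sub_eq_zero.mp this
      apply huniq
      intro g
      rw [hf_l, hf'_l, haev g x]
      have hBw : ∀ a b, B (w a) (w b) = B a b := hw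
      rw [← hBw (aeval (u' : Module.End K E) g x) y]
  · rintro ⟨t, ht, htf⟩
    have hB : ∀ x y, B x y = l (f x y) := by
      intro x y
      have := hf_l 1 x y
      simpa using this.symm
    have hB' : ∀ x y, B x y = l (f' x y) := by
      intro x y
      have := hf'_l 1 x y
      simpa using this.symm
    refine ⟨t, fun x y => ?_, fun x => ?_⟩
    · rw [hB (t x) (t y), htf, ← hB']
    · rw [← ht x, t.symm_apply_apply]
end

section
/- Let M be an R-module that is finite-dimensional as a K-vector space, let η ∈ {1, -1}, and let f : M × M → R be additive in each variable and satisfy f(ρ·x, y) = ρ·f(x, y), f(x, y) = η·σ(f(y, x)), and nondegeneracy (f(x, y) = 0 for all y implies x = 0). Then for every R-linear map λ : M → R there exists y ∈ M such that λ(x) = f(x, y) for all x ∈ M. -/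
open Polynomial Module

set_option synthInstance.maxHeartbeats 1000000
set_option maxHeartbeats 1000000


private lemma aux_trace_nondeg {K : Type*} [Field K] {g : K[X]} (hg : g.Monic)
    (hg1 : 1 ≤ g.natDegree) :
    ∃ t : AdjoinRoot g →ₗ[K] K, ∀ r : AdjoinRoot g, r ≠ 0 → ∃ s, t (r * s) ≠ 0 := by
  set n := g.natDegree with hn
  refine ⟨(Polynomial.lcoeff K (n - 1)).comp (AdjoinRoot.modByMonicHom hg), ?_⟩
  intro r hr
  obtain ⟨p₀, rfl⟩ := AdjoinRoot.mk_surjective (g := g) r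
  set p : K[X] := p₀ %ₘ g with hp
  have hpr : AdjoinRoot.mk g p = AdjoinRoot.mk g p₀ := by
    have := AdjoinRoot.mk_leftInverse hg (AdjoinRoot.mk g p₀)
    rwa [AdjoinRoot.modByMonicHom_mk] at this
  have hp0 : p ≠ 0 := fun h => hr (by rw [← hpr, h, map_zero])
  have hpdeg : p.degree < g.degree := Polynomial.degree_modByMonic_lt p₀ hg
  have hdlt : p.natDegree < n := hn ▸ Polynomial.natDegree_lt_natDegree hp0 hpdeg
  set d := p.natDegree with hd
  refine ⟨AdjoinRoot.mk g (X ^ (n - 1 - d)), ?_⟩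
  have hmul : AdjoinRoot.mk g p₀ * AdjoinRoot.mk g (X ^ (n - 1 - d))
      = AdjoinRoot.mk g (p * X ^ (n - 1 - d)) := by
    rw [map_mul, hpr]
  have hne : (p * X ^ (n - 1 - d)) ≠ 0 := mul_ne_zero hp0 (pow_ne_zero _ Polynomial.X_ne_zero)
  have hntd : (p * X ^ (n - 1 - d)).natDegree = n - 1 := by
    rw [Polynomial.natDegree_mul hp0 (pow_ne_zero _ Polynomial.X_ne_zero),
      Polynomial.natDegree_X_pow]
    omega
  have hdeg2 : (p * X ^ (n - 1 - d)).degree < g.degree := by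
    rw [Polynomial.degree_eq_natDegree hne, hntd, Polynomial.degree_eq_natDegree hg.ne_zero, ← hn]
    exact_mod_cast Nat.sub_lt hg1 one_pos
  rw [hmul]
  have heval : (AdjoinRoot.modByMonicHom hg) (AdjoinRoot.mk g (p * X ^ (n - 1 - d)))
      = p * X ^ (n - 1 - d) := by
    rw [AdjoinRoot.modByMonicHom_mk hg, (Polynomial.modByMonic_eq_self_iff hg).mpr hdeg2]
  rw [LinearMap.comp_apply, heval, Polynomial.lcoeff_apply]
  have hc : (p * X ^ (n - 1 - d)).coeff (n - 1) = p.coeff d := by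
    set k := n - 1 - d with hk
    have h1 : n - 1 = d + k := by omega
    rw [h1, Polynomial.coeff_mul_X_pow]
  rw [hc]
  exact Polynomial.leadingCoeff_ne_zero.mpr hp0

/-- If `M` is a module over `R = K[X]/(q^m)`, finite-dimensional over `K`, and `f` is a
nondegenerate (skew-)Hermitian form on `M` with respect to the involution `σ` of `R`
(`f x y = η • σ (f y x)` with `η = ±1`), then every `R`-linear map `λ : M → R` is of the form
`λ x = f x y` for some `y ∈ M`. -/
theorem stmt_15 {K : Type*} [Field K] (hchar : (2 : K) ≠ 0)
    (q : K[X]) (hq : q.Monic) (hirr : Irreducible q)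
    (c : K) (hrev : q.reverse = c • q) (m : ℕ) (hm : 1 ≤ m)
    (σ : (K[X] ⧸ Ideal.span {q ^ m}) ≃ₐ[K] (K[X] ⧸ Ideal.span {q ^ m}))
    (hσ : σ (Ideal.Quotient.mk (Ideal.span {q ^ m}) X)
        * Ideal.Quotient.mk (Ideal.span {q ^ m}) X = 1)
    {M : Type*} [AddCommGroup M] [Module (K[X] ⧸ Ideal.span {q ^ m}) M]
    [Module K M] [IsScalarTower K (K[X] ⧸ Ideal.span {q ^ m}) M]
    [FiniteDimensional K M]
    (η : K) (hη : η = 1 ∨ η = -1)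
    (f : M → M → (K[X] ⧸ Ideal.span {q ^ m}))
    (hf_add₁ : ∀ x₁ x₂ y, f (x₁ + x₂) y = f x₁ y + f x₂ y)
    (hf_add₂ : ∀ x y₁ y₂, f x (y₁ + y₂) = f x y₁ + f x y₂)
    (hf_lin : ∀ (ρ : K[X] ⧸ Ideal.span {q ^ m}) (x y : M), f (ρ • x) y = ρ * f x y)
    (hf_herm : ∀ x y, f x y = η • σ (f y x))
    (hf_nd : ∀ x, (∀ y, f x y = 0) → x = 0) :
    ∀ lam : M →ₗ[K[X] ⧸ Ideal.span {q ^ m}] (K[X] ⧸ Ideal.span {q ^ m}),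
      ∃ y : M, ∀ x : M, lam x = f x y := by
  intro lam
  let R := K[X] ⧸ Ideal.span {q ^ m}
  have hmon : (q ^ m).Monic := hq.pow m
  have hqdeg : 0 < q.natDegree := hq.natDegree_pos.mpr (fun h => hirr.not_isUnit (h ▸ isUnit_one))
  have hn1 : 1 ≤ (q ^ m).natDegree := by
    rw [natDegree_pow]
    exact Nat.one_le_iff_ne_zero.mpr (by positivity)
  obtain ⟨t, ht⟩ : ∃ t : R →ₗ[K] K, ∀ r : R, r ≠ 0 → ∃ s, t (r * s) ≠ 0 :=
    aux_trace_nondeg hmon hn1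
  have hsm : ∀ (a : K) (r : R), a • r = algebraMap K R a * r := fun a r => by
    rw [← algebraMap_smul R a r, smul_eq_mul]
  -- embed the R-dual into the K-dual
  let Ψ : (M →ₗ[R] R) →ₗ[K] Module.Dual K M :=
    { toFun := fun l => t ∘ₗ (l.restrictScalars K)
      map_add' := fun l₁ l₂ => by ext x; simp
      map_smul' := fun k l => by ext x; simp }
  have hΨ : Function.Injective Ψ := by
    rw [injective_iff_map_eq_zero]
    intro l hl
    have h0 : ∀ z : M, t (l z) = 0 := by
      intro z
      have := LinearMap.ext_iff.mp hl z
      simpa [Ψ] using this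
    ext x
    by_contra hx
    obtain ⟨s, hs⟩ := ht (l x) hx
    have hls : l x * s = l (s • x) := by rw [map_smul, smul_eq_mul, mul_comm]
    exact hs (by rw [hls]; exact h0 _)
  haveI : FiniteDimensional K (M →ₗ[R] R) := FiniteDimensional.of_injective Ψ hΨ
  -- f is K-linear in the second variable
  have key : ∀ (k : K) (x y : M), f x (k • y) = k • f x y := by
    intro k x y
    have h1 : (k • y : M) = (algebraMap K R k) • y := (algebraMap_smul R k y).symm
    rw [h1, hf_herm x ((algebraMap K R k) • y), hf_lin, map_mul, AlgEquiv.commutes,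
      hf_herm x y]
    simp only [hsm]
    ring
  have hzero : ∀ x : M, f x (0 : M) = 0 := by
    intro x
    have h := hf_add₂ x 0 0
    rw [add_zero] at h
    exact (left_eq_add.mp h)
  have hneg : ∀ (x y : M), f x (-y) = -f x y := by
    intro x y
    have h := hf_add₂ x y (-y)
    rw [add_neg_cancel, hzero] at h
    exact eq_neg_of_add_eq_zero_right h.symm
  -- the map y ↦ f ⬝ y
  let Φ : M →ₗ[K] (M →ₗ[R] R) :=
    { toFun := fun y =>
        { toFun := fun x => f x y
          map_add' := fun a b => hf_add₁ a b y
          map_smul' := fun ρ x => by simp [hf_lin, smul_eq_mul] }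
      map_add' := fun y₁ y₂ => LinearMap.ext fun x => hf_add₂ x y₁ y₂
      map_smul' := fun k y => LinearMap.ext fun x => key k x y }
  have hΦ : Function.Injective Φ := by
    intro y₁ y₂ h
    rw [← sub_eq_zero]
    apply hf_nd
    intro z
    have h12 : f z y₁ = f z y₂ := LinearMap.congr_fun h z
    have hz : f z (y₁ - y₂) = 0 := by
      rw [sub_eq_add_neg, hf_add₂, hneg, h12, add_neg_cancel]
    rw [hf_herm, hz, map_zero, smul_zero]
  have le1 : finrank K (M →ₗ[R] R) ≤ finrank K M := by
    have := LinearMap.finrank_le_finrank_of_injective hΨ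
    rwa [Subspace.dual_finrank_eq] at this
  have le2 : finrank K M ≤ finrank K (M →ₗ[R] R) :=
    LinearMap.finrank_le_finrank_of_injective hΦ
  have hsurj : Function.Surjective Φ :=
    (LinearMap.injective_iff_surjective_of_finrank_eq_finrank (le_antisymm le2 le1)).mp hΦ
  obtain ⟨y, hy⟩ := hsurj lam
  exact ⟨y, fun x => by rw [← hy]; rfl⟩
end

section
/- Assume deg q ≥ 2 and reverse(q) = q. Let M be an R-module that is finite-dimensional as a K-vector space, let f : M × M → R be additive in each variable and satisfy f(ρ·x, y) = ρ·f(x, y), f(x, y) = σ(f(y, x)), and nondegeneracy (f(x, y) = 0 for all y implies x = 0). Let π denote the class of q in R and, for 0 ≤ i ≤ m, let M_i = {x ∈ M : π^i·x = 0}. Then for x ∈ M one has f(y, x) = 0 for all y ∈ M_i if and only if x ∈ π^i·M. -/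
/-!
Composing `f` with a `K`-linear functional `T` on `R` for which `(r, a) ↦ T (r * a)` is
nondegenerate (the coefficient of `X ^ (deg q ^ m - 1)` of the reduced representative) turns `f`
into a nondegenerate `K`-bilinear form `B` on `M`. Since `q` is self-reciprocal and `σ ξ = ξ⁻¹`,
`σ π = π * ξ ^ (-deg q)`, so `π ^ i • M` is `B`-orthogonal to `M_i = ker (π ^ i)`. Both
`π ^ i • M` and the `B`-orthogonal of `M_i` have dimension `dim M - dim M_i`, hence they coincide.
-/

open Polynomial

namespace Polynomial.Monic

variable {K : Type*} [Field K] {p : K[X]}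

noncomputable def topCoeff (hp : p.Monic) : (K[X] ⧸ Ideal.span {p}) →ₗ[K] K :=
  (lcoeff K (p.natDegree - 1)).comp (AdjoinRoot.modByMonicHom hp)

theorem topCoeff_mk_of_natDegree_lt (hp : p.Monic) {g : K[X]} (hg : g.natDegree < p.natDegree) :
    hp.topCoeff (Ideal.Quotient.mk _ g) = g.coeff (p.natDegree - 1) := by
  have : g %ₘ p = g := (modByMonic_eq_self_iff hp).mpr (degree_lt_degree hg)
  exact congrArg (coeff · (p.natDegree - 1)) ((AdjoinRoot.modByMonicHom_mk hp g).trans this)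

/-- Shifting the reduced representative of `a ≠ 0` by a power of `X` moves its leading
coefficient into degree `deg p - 1`. -/
theorem eq_zero_of_forall_topCoeff_mul_eq_zero (hp : p.Monic) {a : K[X] ⧸ Ideal.span {p}}
    (h : ∀ r, hp.topCoeff (r * a) = 0) : a = 0 := by
  obtain ⟨f, rfl⟩ := Ideal.Quotient.mk_surjective a
  have hfg : Ideal.Quotient.mk _ (f %ₘ p) = Ideal.Quotient.mk (Ideal.span {p}) f := by
    refine Ideal.Quotient.eq.mpr (Ideal.mem_span_singleton.mpr ⟨-(f /ₘ p), ?_⟩)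
    rw [modByMonic_eq_sub_mul_div f]; ring
  set g := f %ₘ p
  by_contra ha
  have hg : g ≠ 0 := by rintro hg; exact ha (by rw [← hfg, hg, map_zero])
  have hgp : g.natDegree < p.natDegree :=
    natDegree_lt_natDegree hg (degree_modByMonic_lt _ hp)
  set k := p.natDegree - 1 - g.natDegree
  have hshift : (X ^ k * g).natDegree = p.natDegree - 1 := by
    rw [Polynomial.natDegree_mul (pow_ne_zero k X_ne_zero) hg, natDegree_X_pow]; omega
  have := h (Ideal.Quotient.mk _ (X ^ k))
  rw [← hfg, ← map_mul, topCoeff_mk_of_natDegree_lt hp (by omega), ← hshift,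
    Polynomial.coeff_natDegree, Polynomial.leadingCoeff_mul, leadingCoeff_X_pow, one_mul] at this
  exact hg (leadingCoeff_eq_zero.mp this)

end Polynomial.Monic

theorem Polynomial.map_aeval_eq_aeval_reverse_mul {R A : Type*} [CommSemiring R] [CommSemiring A]
    [Algebra R A] (σ : A →ₐ[R] A) {ξ : A} (hξ : σ ξ * ξ = 1) (q : R[X]) :
    σ (aeval ξ q) = aeval ξ q.reverse * σ ξ ^ q.natDegree := by
  let : Invertible (σ ξ) := ⟨ξ, by rw [mul_comm, hξ], hξ⟩
  rw [← aeval_algHom_apply, aeval_def, aeval_def, ← eval₂_reverse_mul_pow]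
  rfl

theorem LinearMap.BilinForm.orthogonal_ker_eq_range {K V : Type*} [Field K] [AddCommGroup V]
    [Module K V] [FiniteDimensional K V] {B : LinearMap.BilinForm K V} (hB : LinearMap.ker B = ⊥)
    {L : Module.End K V} (hL : ∀ y z, L y = 0 → B y (L z) = 0) :
    B.orthogonal (LinearMap.ker L) = LinearMap.range L := by
  refine (Submodule.eq_of_le_of_finrank_le ?_ ?_).symm
  · rintro _ ⟨z, rfl⟩ y hy
    exact hL y z hy
  · have := B.finrank_add_finrank_orthogonal' (LinearMap.ker L)
    rw [hB, inf_bot_eq, finrank_bot, add_zero] at this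
    have := L.finrank_range_add_finrank_ker
    omega

namespace LinearMap

variable {K R M : Type*} [Field K] [CommRing R] [Algebra K R]
  [AddCommGroup M] [Module R M]
  {σ : R ≃ₐ[K] R} (F : M →ₗ[R] M →ₛₗ[(σ : R →+* R)] R)

theorem apply_smul_eq_zero_of_dvd {ρ : R} (hρ : ρ ∣ σ ρ) {y : M} (hy : ρ • y = 0) (z : M) :
    F y (ρ • z) = 0 := by
  obtain ⟨u, hu⟩ := hρ
  rw [map_smulₛₗ, RingHom.coe_coe, hu, smul_eq_mul, mul_comm ρ, mul_assoc, ← smul_eq_mul ρ,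
    ← smul_apply, ← map_smul, hy, map_zero, zero_apply, mul_zero]

variable [Module K M] [IsScalarTower K R M]

theorem apply_smul_of_tower (x : M) (c : K) (y : M) : F x (c • y) = c • F x y := by
  rw [← algebraMap_smul R c y, map_smulₛₗ, RingHom.coe_coe, AlgEquiv.commutes, algebraMap_smul]

noncomputable def compFunctional (T : R →ₗ[K] K) : LinearMap.BilinForm K M :=
  mk₂ K (fun x y => T (F x y))
    (fun x₁ x₂ y => by rw [map_add, add_apply, map_add])
    (fun c x y => by
      rw [← algebraMap_smul R c x, map_smul, smul_apply, algebraMap_smul, map_smul])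
    (fun x y₁ y₂ => by rw [map_add, map_add])
    (fun c x y => by rw [apply_smul_of_tower, map_smul])

@[simp]
theorem compFunctional_apply (T : R →ₗ[K] K) (x y : M) : F.compFunctional T x y = T (F x y) := rfl

theorem ker_compFunctional_eq_bot (hF : F.SeparatingLeft) {T : R →ₗ[K] K}
    (hT : ∀ a, (∀ r, T (r * a) = 0) → a = 0) : ker (F.compFunctional T) = ⊥ := by
  refine ker_eq_bot'.mpr fun x hx => hF x fun y => hT _ fun r => ?_
  rw [show r * F x y = F x (σ.symm r • y) by
    rw [map_smulₛₗ, RingHom.coe_coe, σ.apply_symm_apply, smul_eq_mul]]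
  exact LinearMap.congr_fun hx _

theorem forall_apply_eq_zero_iff_exists_eq_smul [FiniteDimensional K M] (hF : F.SeparatingLeft)
    {T : R →ₗ[K] K} (hT : ∀ a, (∀ r, T (r * a) = 0) → a = 0) {ρ : R} (hρ : ρ ∣ σ ρ) (x : M) :
    (∀ y, ρ • y = 0 → F y x = 0) ↔ ∃ z, x = ρ • z := by
  have horth := BilinForm.orthogonal_ker_eq_range (ker_compFunctional_eq_bot F hF hT)
    (L := Algebra.lsmul K K M ρ) fun y z hy => by
      rw [compFunctional_apply, Algebra.lsmul_coe, F.apply_smul_eq_zero_of_dvd hρ hy, map_zero]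
  constructor
  · intro hx
    have : x ∈ (F.compFunctional T).orthogonal (ker (Algebra.lsmul K K M ρ)) :=
      fun y hy => by rw [compFunctional_apply, hx y hy, map_zero]
    obtain ⟨z, rfl⟩ := horth ▸ this
    exact ⟨z, rfl⟩
  · rintro ⟨z, rfl⟩ y hy
    exact F.apply_smul_eq_zero_of_dvd hρ hy z

end LinearMap

theorem stmt_16_general {K : Type*} [Field K]
    (q : K[X]) (hq : q.Monic)
    (hrev : q.reverse = q) (m : ℕ)
    (σ : (K[X] ⧸ Ideal.span {q ^ m}) ≃ₐ[K] (K[X] ⧸ Ideal.span {q ^ m}))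
    (hσ : σ (Ideal.Quotient.mk (Ideal.span {q ^ m}) X)
        * Ideal.Quotient.mk (Ideal.span {q ^ m}) X = 1)
    {M : Type*} [AddCommGroup M] [Module (K[X] ⧸ Ideal.span {q ^ m}) M]
    [Module K M] [IsScalarTower K (K[X] ⧸ Ideal.span {q ^ m}) M]
    [FiniteDimensional K M]
    (f : M → M → (K[X] ⧸ Ideal.span {q ^ m}))
    (hf_add₁ : ∀ x₁ x₂ y, f (x₁ + x₂) y = f x₁ y + f x₂ y)
    (hf_add₂ : ∀ x y₁ y₂, f x (y₁ + y₂) = f x y₁ + f x y₂)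
    (hf_lin : ∀ (ρ : K[X] ⧸ Ideal.span {q ^ m}) (x y : M), f (ρ • x) y = ρ * f x y)
    (hf_herm : ∀ x y, f x y = σ (f y x))
    (hf_nd : ∀ x, (∀ y, f x y = 0) → x = 0)
    (i : ℕ) :
    ∀ x : M,
      (∀ y : M, (Ideal.Quotient.mk (Ideal.span {q ^ m}) q) ^ i • y = 0 → f y x = 0) ↔
      (∃ z : M, x = (Ideal.Quotient.mk (Ideal.span {q ^ m}) q) ^ i • z) := by
  set π := Ideal.Quotient.mk (Ideal.span {q ^ m}) q
  have hf_semilin : ∀ ρ x y, f x (ρ • y) = σ ρ * f x y := fun ρ x y => by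
    rw [hf_herm, hf_lin, map_mul, ← hf_herm]
  let F := LinearMap.mk₂'ₛₗ (RingHom.id _)
    (σ : K[X] ⧸ Ideal.span {q ^ m} →+* K[X] ⧸ Ideal.span {q ^ m}) f
    hf_add₁ hf_lin hf_add₂ hf_semilin
  have hπ : π ∣ σ π := by
    have hmk : aeval (Ideal.Quotient.mk _ X) q = π := AdjoinRoot.aeval_eq q
    have := map_aeval_eq_aeval_reverse_mul σ.toAlgHom hσ q
    rw [hrev, hmk] at this
    exact ⟨_, this⟩
  exact F.forall_apply_eq_zero_iff_exists_eq_smul hf_nd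
    (fun _ => (hq.pow m).eq_zero_of_forall_topCoeff_mul_eq_zero)
    (map_pow σ π i ▸ pow_dvd_pow_of_dvd hπ i)

/-- Assume `deg q ≥ 2` and `reverse q = q`. For a nondegenerate symmetric Hermitian form `f`
on an `R`-module `M` (`R = K[X]/(q^m)`), finite-dimensional over `K`, and `π` the class of `q`
in `R`, an element `x ∈ M` satisfies `f y x = 0` for all `y` with `π^i • y = 0` iff
`x ∈ π^i • M` (`0 ≤ i ≤ m`). -/
theorem stmt_16 {K : Type*} [Field K] (hchar : (2 : K) ≠ 0)
    (q : K[X]) (hq : q.Monic) (hirr : Irreducible q)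
    (hdeg : 2 ≤ q.natDegree) (hrev : q.reverse = q) (m : ℕ) (hm : 1 ≤ m)
    (σ : (K[X] ⧸ Ideal.span {q ^ m}) ≃ₐ[K] (K[X] ⧸ Ideal.span {q ^ m}))
    (hσ : σ (Ideal.Quotient.mk (Ideal.span {q ^ m}) X)
        * Ideal.Quotient.mk (Ideal.span {q ^ m}) X = 1)
    {M : Type*} [AddCommGroup M] [Module (K[X] ⧸ Ideal.span {q ^ m}) M]
    [Module K M] [IsScalarTower K (K[X] ⧸ Ideal.span {q ^ m}) M]
    [FiniteDimensional K M]
    (f : M → M → (K[X] ⧸ Ideal.span {q ^ m}))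
    (hf_add₁ : ∀ x₁ x₂ y, f (x₁ + x₂) y = f x₁ y + f x₂ y)
    (hf_add₂ : ∀ x y₁ y₂, f x (y₁ + y₂) = f x y₁ + f x y₂)
    (hf_lin : ∀ (ρ : K[X] ⧸ Ideal.span {q ^ m}) (x y : M), f (ρ • x) y = ρ * f x y)
    (hf_herm : ∀ x y, f x y = σ (f y x))
    (hf_nd : ∀ x, (∀ y, f x y = 0) → x = 0)
    (i : ℕ) (hi : i ≤ m) :
    ∀ x : M,
      (∀ y : M, (Ideal.Quotient.mk (Ideal.span {q ^ m}) q) ^ i • y = 0 → f y x = 0) ↔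
      (∃ z : M, x = (Ideal.Quotient.mk (Ideal.span {q ^ m}) q) ^ i • z) :=
  stmt_16_general q hq hrev m σ hσ f hf_add₁ hf_add₂ hf_lin hf_herm hf_nd i
end

section
/- Let u be a symplectic transformation of E whose minimal polynomial is (X - c)^m with c = 1 or c = -1, let N = u - c·id, and let i be an odd integer with 1 ≤ i ≤ m. Then the K-dimension of the quotient space ker N^i / (ker N^{i-1} + (ker N^i ∩ range N)) is even (equivalently, the number of Jordan blocks of u of size i is even). -/
/-!
On `W = ker N^i` consider the pairing `(x, y) ↦ B x (N^(i-1) y)`. The adjoint of `N = u - c` is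
`u⁻¹ - c = -c u⁻¹ N`, and on `W` its `(i-1)`-th power agrees with `N^(i-1)`, because `u⁻¹` acts
by `c` on `ker N` and `i - 1` is even; hence the pairing is alternating. Since the orthogonal of
`ker N^i` is `range N^i`, its radical is exactly `ker N^(i-1) + (W ∩ range N)`. The quotient
therefore carries a nondegenerate alternating form, so its dimension is even.
-/

theorem Module.End.mem_ker_pow_sup_inf_range_iff {R M : Type*} [Ring R] [AddCommGroup M]
    [Module R M] {N : Module.End R M} {k : ℕ} {x : M} (hx : x ∈ LinearMap.ker (N ^ (k + 1))) :
    x ∈ LinearMap.ker (N ^ k) ⊔ (LinearMap.ker (N ^ (k + 1)) ⊓ LinearMap.range N) ↔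
      (N ^ k) x ∈ LinearMap.range (N ^ (k + 1)) := by
  have hshift : ∀ z, (N ^ k) (N z) = (N ^ (k + 1)) z := fun z => by
    rw [pow_succ, Module.End.mul_apply]
  constructor
  · intro hx'
    obtain ⟨a, ha, _, ⟨-, z, rfl⟩, rfl⟩ := Submodule.mem_sup.mp hx'
    exact ⟨z, by rw [map_add, LinearMap.mem_ker.mp ha, zero_add, hshift]⟩
  · rintro ⟨z, hz⟩
    refine Submodule.mem_sup.mpr
      ⟨x - N z, ?_, N z, Submodule.mem_inf.mpr ⟨?_, z, rfl⟩, sub_add_cancel x (N z)⟩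
    · rw [LinearMap.mem_ker, map_sub, hshift, hz, sub_self]
    · rw [LinearMap.mem_ker, ← Module.End.mul_apply, ← pow_succ, pow_succ', Module.End.mul_apply,
        hz, ← Module.End.mul_apply, ← pow_succ', LinearMap.mem_ker.mp hx]

theorem Module.End.pow_apply_of_apply_eq_smul {R M : Type*} [Semiring R] [AddCommMonoid M]
    [Module R M] {f : Module.End R M} {a : R} {z : M} (h : f z = a • z) (k : ℕ) :
    (f ^ k) z = a ^ k • z := by
  induction k with
  | zero => simp
  | succ k ih => rw [pow_succ', Module.End.mul_apply, ih, map_smul, h, smul_smul, pow_succ]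

theorem LinearMap.IsAdjointPair.pow_s19 {R M₁ M₂ : Type*} [CommSemiring R] [AddCommMonoid M₁]
    [Module R M₁] [AddCommMonoid M₂] [Module R M₂] {B : M₁ →ₗ[R] M₁ →ₗ[R] M₂}
    {f g : Module.End R M₁} (h : IsAdjointPair B B f g) (k : ℕ) :
    IsAdjointPair B B ⇑(f ^ k) ⇑(g ^ k) := by
  induction k with
  | zero => exact isAdjointPair_one
  | succ k ih => rw [pow_succ' f, pow_succ g]; exact h.mul ih

namespace LinearMap.BilinForm

variable {K V : Type*} [Field K] [AddCommGroup V] [Module K V]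
  {B : LinearMap.BilinForm K V}

theorem even_finrank_of_isAlt [FiniteDimensional K V] (hchar : (2 : K) ≠ 0) (halt : B.IsAlt)
    (hnd : B.Nondegenerate) :
    Even (Module.finrank K V) := by
  by_contra hodd
  rw [Nat.not_even_iff_odd] at hodd
  set b := Module.finBasis K V
  set A := toMatrix b B
  have hskew : A.transpose = -A := by
    ext i j
    simpa [A] using (LinearMap.IsAlt.neg halt (b i) (b j)).symm
  have hdet := A.det_transpose
  rw [hskew, Matrix.det_neg, Fintype.card_fin, hodd.neg_one_pow, neg_one_mul] at hdet
  have h2 : (2 : K) * A.det = 0 := by linear_combination -hdet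
  exact (mul_ne_zero hchar ((nondegenerate_iff_det_ne_zero b).mp hnd)) h2

theorem even_finrank_quotient_ker_of_isAlt [FiniteDimensional K V] (hchar : (2 : K) ≠ 0)
    (halt : B.IsAlt) :
    Even (Module.finrank K (V ⧸ LinearMap.ker B)) := by
  obtain ⟨C, hC⟩ := (LinearMap.ker B).exists_isCompl
  have hdisj : Disjoint C (B.orthogonal C) := by
    rw [Submodule.disjoint_def]
    intro x hxC hx
    have hxker : x ∈ LinearMap.ker B := by
      refine LinearMap.mem_ker.mpr (LinearMap.ext fun y => ?_)
      obtain ⟨k, hk, c, hc, rfl⟩ := Submodule.mem_sup.mp (hC.sup_eq_top ▸ Submodule.mem_top : y ∈ _)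
      rw [map_add, ← LinearMap.IsAlt.neg halt k x, ← LinearMap.IsAlt.neg halt c x,
        LinearMap.mem_ker.mp hk, hx c hc]
      simp
    exact Submodule.disjoint_def.mp hC.disjoint x hxker hxC
  rw [(Submodule.quotientEquivOfIsCompl _ C hC).finrank_eq]
  exact even_finrank_of_isAlt hchar (fun x => halt x)
    (B.nondegenerate_restrict_of_disjoint_orthogonal halt.isRefl hdisj)

theorem range_eq_orthogonal_ker_of_isAdjointPair [FiniteDimensional K V] (hnd : B.Nondegenerate)
    (hrefl : B.IsRefl)    {T T' : Module.End K V} (hT : IsAdjointPair B B T T') :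
    LinearMap.range T = B.orthogonal (LinearMap.ker T') := by
  have hker : LinearMap.ker T' = B.orthogonal (LinearMap.range T) := by
    ext y
    simp only [LinearMap.mem_ker, mem_orthogonal_iff, LinearMap.mem_range, forall_exists_index,
      forall_apply_eq_imp_iff, hT _ y]
    exact ⟨fun h x => by rw [h, map_zero], hnd.2 _⟩
  rw [hker, orthogonal_orthogonal hnd hrefl]

def kerPowSuccForm (B : LinearMap.BilinForm K V) (N : Module.End K V) (k : ℕ) :
    LinearMap.BilinForm K (LinearMap.ker (N ^ (k + 1))) :=
  B.compl₁₂ (LinearMap.ker (N ^ (k + 1))).subtype ((N ^ k) ∘ₗ (LinearMap.ker (N ^ (k + 1))).subtype)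

@[simp]
theorem kerPowSuccForm_apply (B : LinearMap.BilinForm K V) (N : Module.End K V) (k : ℕ)
    (x y : LinearMap.ker (N ^ (k + 1))) : kerPowSuccForm B N k x y = B x ((N ^ k) y) :=
  rfl

variable {N M : Module.End K V} {k : ℕ}

theorem apply_pow_eq_neg_apply_pow (halt : B.IsAlt) (hadj : IsAdjointPair B B N M)
    (hagree : ∀ y ∈ LinearMap.ker (N ^ (k + 1)), (M ^ k) y = (N ^ k) y)
    (x : V) {y : V} (hy : y ∈ LinearMap.ker (N ^ (k + 1))) :
    B x ((N ^ k) y) = -B y ((N ^ k) x) := by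
  rw [← hagree y hy, ← hadj.pow_s19 k x y, LinearMap.IsAlt.neg halt]

theorem isAlt_kerPowSuccForm (hchar : (2 : K) ≠ 0) (halt : B.IsAlt)
    (hadj : IsAdjointPair B B N M)
    (hagree : ∀ y ∈ LinearMap.ker (N ^ (k + 1)), (M ^ k) y = (N ^ k) y) :
    (kerPowSuccForm B N k).IsAlt := by
  intro x
  have h := apply_pow_eq_neg_apply_pow halt hadj hagree x x.2
  rw [kerPowSuccForm_apply]
  exact (mul_eq_zero.mp (by linear_combination h : (2 : K) * B x ((N ^ k) x) = 0)).resolve_left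
    hchar

theorem ker_kerPowSuccForm [FiniteDimensional K V] (hnd : B.Nondegenerate) (halt : B.IsAlt)
    (hadj : IsAdjointPair B B N M)
    (hker : LinearMap.ker (M ^ (k + 1)) = LinearMap.ker (N ^ (k + 1)))
    (hagree : ∀ y ∈ LinearMap.ker (N ^ (k + 1)), (M ^ k) y = (N ^ k) y) :
    LinearMap.ker (kerPowSuccForm B N k) =
      (LinearMap.ker (N ^ k) ⊔ (LinearMap.ker (N ^ (k + 1)) ⊓ LinearMap.range N)).comap
        (LinearMap.ker (N ^ (k + 1))).subtype := by
  have horth : B.orthogonal (LinearMap.ker (N ^ (k + 1))) = LinearMap.range (N ^ (k + 1)) := by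
    rw [range_eq_orthogonal_ker_of_isAdjointPair hnd halt.isRefl (hadj.pow_s19 (k + 1)), hker]
  ext x
  rw [Submodule.mem_comap, Submodule.subtype_apply,
    Module.End.mem_ker_pow_sup_inf_range_iff x.2, ← horth, LinearMap.mem_ker]
  constructor
  · intro hx y hy
    have := LinearMap.congr_fun hx ⟨y, hy⟩
    rw [kerPowSuccForm_apply, apply_pow_eq_neg_apply_pow halt hadj hagree _ hy] at this
    simpa using this
  · intro hx
    ext y
    rw [kerPowSuccForm_apply, apply_pow_eq_neg_apply_pow halt hadj hagree _ y.2, hx y y.2,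
      neg_zero, LinearMap.zero_apply]

end LinearMap.BilinForm

section Symplectic

variable {K E : Type*} [Field K] [AddCommGroup E] [Module K E]
  {B : LinearMap.BilinForm K E} {u : E ≃ₗ[K] E} {c : K}

theorem isAdjointPair_symm_of_isometry (hu : ∀ x y, B (u x) (u y) = B x y) :
    LinearMap.IsAdjointPair B B u u.symm := fun x y => by
  rw [← hu x (u.symm y), LinearEquiv.apply_symm_apply]

theorem isAdjointPair_sub_smul_one_of_isometry (hu : ∀ x y, B (u x) (u y) = B x y) :
    LinearMap.IsAdjointPair B B ⇑((u : Module.End K E) - c • 1)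
      ⇑((u.symm : Module.End K E) - c • 1) :=
  (isAdjointPair_symm_of_isometry hu).sub (LinearMap.isAdjointPair_one.smul c)

theorem commute_symm_sub_smul_one :
    Commute (u.symm : Module.End K E) ((u : Module.End K E) - c • 1) := by
  refine Commute.sub_right ?_ ((Commute.one_right _).smul_right c)
  ext x
  simp

theorem symm_sub_smul_one_eq (hc : c * c = 1) :
    (u.symm : Module.End K E) - c • 1 =
      (-c) • ((u.symm : Module.End K E) * ((u : Module.End K E) - c • 1)) := by
  ext x
  simp only [LinearMap.sub_apply, LinearMap.smul_apply, Module.End.mul_apply, LinearEquiv.coe_coe,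
    Module.End.one_apply, map_sub, map_smul, LinearEquiv.symm_apply_apply]
  linear_combination (norm := module) (-hc) • u.symm x

theorem ker_symm_sub_smul_one_pow (hc : c * c = 1) (k : ℕ) :
    LinearMap.ker (((u.symm : Module.End K E) - c • 1) ^ k) =
      LinearMap.ker (((u : Module.End K E) - c • 1) ^ k) := by
  have hc0 : -c ≠ 0 := neg_ne_zero.mpr (left_ne_zero_of_mul_eq_one hc)
  rw [symm_sub_smul_one_eq hc, smul_pow, commute_symm_sub_smul_one.mul_pow,
    LinearMap.ker_smul _ _ (pow_ne_zero k hc0), Module.End.mul_eq_comp,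
    LinearMap.ker_comp_of_ker_eq_bot]
  rw [LinearMap.ker_eq_bot, Module.End.coe_pow]
  exact u.symm.injective.iterate k

theorem symm_apply_eq_smul (hc : c * c = 1) {z : E} (hz : u z = c • z) : u.symm z = c • z := by
  rw [LinearEquiv.symm_apply_eq, map_smul, hz, smul_smul, hc, one_smul]

theorem symm_sub_smul_one_pow_apply (hc : c * c = 1) (k : ℕ) {y : E}
    (hy : y ∈ LinearMap.ker (((u : Module.End K E) - c • 1) ^ (k + 1))) :
    (((u.symm : Module.End K E) - c • 1) ^ k) y =
      (-1 : K) ^ k • (((u : Module.End K E) - c • 1) ^ k) y := by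
  set z := (((u : Module.End K E) - c • 1) ^ k) y
  have hz : u z = c • z := by
    rw [LinearMap.mem_ker, pow_succ', Module.End.mul_apply] at hy
    simpa [sub_eq_zero] using hy
  rw [symm_sub_smul_one_eq hc, smul_pow, commute_symm_sub_smul_one.mul_pow, LinearMap.smul_apply,
    Module.End.mul_apply, Module.End.pow_apply_of_apply_eq_smul (symm_apply_eq_smul hc hz),
    smul_smul, ← mul_pow, neg_mul, hc]

end Symplectic

open Polynomial

open LinearMap.BilinForm in
theorem stmt_19_general {K E : Type*} [Field K] (hchar : (2 : K) ≠ 0)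
    [AddCommGroup E] [Module K E] [FiniteDimensional K E]
    (B : E →ₗ[K] E →ₗ[K] K) (halt : ∀ x, B x x = 0)
    (hnd : ∀ x, (∀ y, B x y = 0) → x = 0)
    (u : E ≃ₗ[K] E) (hu : ∀ x y, B (u x) (u y) = B x y)
    (c : K) (hc : c = 1 ∨ c = -1)
    (N : Module.End K E) (hN : N = (u : Module.End K E) - c • (1 : Module.End K E))
    (i : ℕ) (hodd : Odd i) :
    Even (Module.finrank K
      (LinearMap.ker (N ^ i) ⧸
        Submodule.comap (LinearMap.ker (N ^ i)).subtype
          (LinearMap.ker (N ^ (i - 1)) ⊔ (LinearMap.ker (N ^ i) ⊓ LinearMap.range N)))) := by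
  obtain ⟨j, rfl⟩ := hodd
  have hc2 : c * c = 1 := by rcases hc with rfl | rfl <;> norm_num
  have halt' : B.IsAlt := halt
  have hnd' : B.Nondegenerate := halt'.isRefl.nondegenerate_iff_separatingLeft.mpr hnd
  set M : Module.End K E := (u.symm : Module.End K E) - c • 1
  have hadj : LinearMap.IsAdjointPair B B N M := hN ▸ isAdjointPair_sub_smul_one_of_isometry hu
  have hker : LinearMap.ker (M ^ (2 * j + 1)) = LinearMap.ker (N ^ (2 * j + 1)) :=
    hN ▸ ker_symm_sub_smul_one_pow hc2 _
  have hagree : ∀ y ∈ LinearMap.ker (N ^ (2 * j + 1)), (M ^ (2 * j)) y = (N ^ (2 * j)) y := by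
    intro y hy
    subst hN
    rw [symm_sub_smul_one_pow_apply hc2 _ hy, (even_two_mul j).neg_one_pow, one_smul]
  rw [Nat.add_sub_cancel, ← ker_kerPowSuccForm hnd' halt' hadj hker hagree]
  exact even_finrank_quotient_ker_of_isAlt hchar (isAlt_kerPowSuccForm hchar halt' hadj hagree)

/-- For a symplectic `u` with minimal polynomial `(X - c)^m` (`c = ±1`), setting
`N = u - c • id`, for every odd `i` with `1 ≤ i ≤ m` the dimension of
`ker N^i / (ker N^(i-1) + ker N^i ∩ range N)` is even. -/
theorem stmt_19 {K E : Type*} [Field K] (hchar : (2 : K) ≠ 0)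
    [AddCommGroup E] [Module K E] [FiniteDimensional K E]
    (B : E →ₗ[K] E →ₗ[K] K) (halt : ∀ x, B x x = 0)
    (hnd : ∀ x, (∀ y, B x y = 0) → x = 0)
    (u : E ≃ₗ[K] E) (hu : ∀ x y, B (u x) (u y) = B x y)
    (c : K) (hc : c = 1 ∨ c = -1) (m : ℕ)
    (hmin : minpoly K (u : Module.End K E) = (X - C c) ^ m)
    (N : Module.End K E) (hN : N = (u : Module.End K E) - c • (1 : Module.End K E))
    (i : ℕ) (hodd : Odd i) (hi1 : 1 ≤ i) (him : i ≤ m) :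
    Even (Module.finrank K
      (LinearMap.ker (N ^ i) ⧸
        Submodule.comap (LinearMap.ker (N ^ i)).subtype
          (LinearMap.ker (N ^ (i - 1)) ⊔ (LinearMap.ker (N ^ i) ⊓ LinearMap.range N)))) :=
  stmt_19_general hchar B halt hnd u hu c hc N hN i hodd
end
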